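/- arXiv:2007.07282 — 6 statements merged into one kernel-verified Lean document; each statement's English description precedes it below -/
import Mathlib

section
/- Let F be a commutative ℤ-graded ring in which every nonzero homogeneous element is invertible. Then F₀ is a field, and either F = F₀ (concentrated in degree zero) or there exists d > 0 and x ∈ F_d such that F is isomorphic as a graded ring to the Laurent polynomial ring F₀[x, x⁻¹]; moreover in the latter case d is the smallest positive integer with F_d ≠ 0. -/
open DirectSum

/-! The degrees in which `F` is nonzero form a subgroup of `ℤ`, because nonzero homogeneous
elements are units and the inverse of a unit of degree `i` has degree `-i`; so they are the
multiples of some `d ≥ 0`. If `d > 0`, a nonzero `x` of degree `d` is a unit and `T ↦ x` defines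
`F₀[T, T⁻¹] → F`. It is injective because the monomials `c Tⁿ` land in the pairwise distinct
degrees `n d`, and surjective because an element `a` of degree `k d` is `(a x⁻ᵏ) xᵏ` with
`a x⁻ᵏ ∈ F₀`. -/

theorem Int.exists_nonneg_eq_zmultiples (S : AddSubgroup ℤ) :
    ∃ d : ℤ, 0 ≤ d ∧ S = AddSubgroup.zmultiples d := by
  obtain ⟨a, rfl⟩ := Int.subgroup_cyclic S
  exact ⟨a.natAbs, Int.natCast_nonneg _, by
    rw [Int.zmultiples_natAbs, AddSubgroup.zmultiples_eq_closure]⟩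

section Units

variable {ι σ F : Type*} [DecidableEq ι] [AddGroup ι] [Semiring F] [SetLike σ F]
  [AddSubmonoidClass σ F] (𝒜 : ι → σ) [GradedRing 𝒜]

theorem Units.inv_mem_graded {i : ι} (u : Fˣ) (hu : (u : F) ∈ 𝒜 i) :
    ((u⁻¹ : Fˣ) : F) ∈ 𝒜 (-i) := by
  have hmul : (u : F) * (decompose 𝒜 ((u⁻¹ : Fˣ) : F) (-i) : F) = 1 := by
    rw [← coe_decompose_mul_add_of_left_mem 𝒜 hu, Units.mul_inv, add_neg_cancel,
      decompose_of_mem_same 𝒜 SetLike.GradedOne.one_mem]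
  rw [Units.inv_eq_of_mul_eq_one_right hmul]
  exact SetLike.coe_mem _

theorem Units.zpow_mem_graded {i : ι} (u : Fˣ) (hu : (u : F) ∈ 𝒜 i) (k : ℤ) :
    ((u ^ k : Fˣ) : F) ∈ 𝒜 (k • i) := by
  obtain ⟨n, rfl | rfl⟩ := k.eq_nat_or_neg
  · simpa using SetLike.pow_mem_graded n hu
  · rw [zpow_neg, neg_zsmul, natCast_zsmul]
    exact Units.inv_mem_graded 𝒜 _ (by simpa using SetLike.pow_mem_graded n hu)

end Units

section GradedField

variable {ι σ F : Type*} [DecidableEq ι] [AddGroup ι] [CommSemiring F] [Nontrivial F]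
  [SetLike σ F] [AddSubmonoidClass σ F] (𝒜 : ι → σ) [GradedRing 𝒜]
  (h : ∀ a : F, a ≠ 0 → SetLike.IsHomogeneousElem 𝒜 a → IsUnit a)
include h

theorem isField_gradeZero : IsField (𝒜 0) := by
  refine ⟨⟨1, 0, fun h10 => one_ne_zero (congrArg Subtype.val h10 : (1 : F) = 0)⟩, mul_comm,
    fun {a} ha => ?_⟩
  obtain ⟨u, hu⟩ := h a (by simpa [← ZeroMemClass.coe_eq_zero] using ha) ⟨0, a.2⟩
  have hinv := Units.inv_mem_graded 𝒜 u (hu ▸ a.2)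
  rw [neg_zero] at hinv
  exact ⟨⟨_, hinv⟩, Subtype.ext (by simp [← hu])⟩

def nonzeroDegrees : AddSubgroup ι where
  carrier := {i | ∃ a ∈ 𝒜 i, a ≠ 0}
  zero_mem' := ⟨1, SetLike.GradedOne.one_mem, one_ne_zero⟩
  add_mem' := by
    rintro i j ⟨a, ha, ha0⟩ ⟨b, hb, hb0⟩
    obtain ⟨u, rfl⟩ := h a ha0 ⟨i, ha⟩
    exact ⟨u * b, SetLike.GradedMul.mul_mem ha hb, by simpa using hb0⟩
  neg_mem' := by
    rintro i ⟨a, ha, ha0⟩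
    obtain ⟨u, rfl⟩ := h a ha0 ⟨i, ha⟩
    exact ⟨_, Units.inv_mem_graded 𝒜 u ha, Units.ne_zero _⟩

theorem mem_nonzeroDegrees {i : ι} : i ∈ nonzeroDegrees 𝒜 h ↔ ∃ a ∈ 𝒜 i, a ≠ 0 := Iff.rfl

end GradedField

namespace LaurentPolynomial

variable {σ F : Type*} [CommSemiring F] [SetLike σ F] [AddSubmonoidClass σ F]
  (𝒜 : ℤ → σ) [GradedRing 𝒜] {d : ℤ} (u : Fˣ) (hu : (u : F) ∈ 𝒜 d)
include hu

theorem coe_decompose_eval₂_mul (hd : d ≠ 0) (p : LaurentPolynomial (𝒜 0)) (m : ℤ) :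
    (decompose 𝒜 (eval₂ (algebraMap (𝒜 0) F) u p) (m * d) : F) = p.coeff m * (u ^ m : Fˣ) := by
  induction p using LaurentPolynomial.induction_on' with
  | add p q hp hq =>
    rw [map_add, decompose_add, DirectSum.add_apply, AddMemClass.coe_add, hp, hq,
      AddMonoidAlgebra.coeff_add, Finsupp.add_apply, AddMemClass.coe_add, add_mul]
  | C_mul_T n a =>
    have hmem : (a : F) * (u ^ n : Fˣ) ∈ 𝒜 (n * d) := by
      simpa using SetLike.GradedMul.mul_mem a.2 (Units.zpow_mem_graded 𝒜 u hu n)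
    rw [eval₂_C_mul_T, SetLike.GradeZero.algebraMap_apply, ← single_eq_C_mul_T,
      AddMonoidAlgebra.coeff_single, Finsupp.single_apply]
    by_cases hnm : n = m
    · subst hnm
      rw [if_pos rfl, decompose_of_mem_same 𝒜 hmem]
    · rw [if_neg hnm, decompose_of_mem_ne 𝒜 hmem (by simpa [hd] using hnm),
        ZeroMemClass.coe_zero, zero_mul]

theorem eval₂_injective_of_mem_graded (hd : d ≠ 0) :
    Function.Injective (eval₂ (algebraMap (𝒜 0) F) u) := by
  intro p q hpq
  ext m
  have hm := coe_decompose_eval₂_mul 𝒜 u hu hd p m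
  rwa [hpq, coe_decompose_eval₂_mul 𝒜 u hu hd q m, Units.mul_left_inj, eq_comm] at hm

theorem eval₂_surjective_of_mem_graded (hdvd : ∀ i, ∀ a ∈ 𝒜 i, a ≠ 0 → d ∣ i) :
    Function.Surjective (eval₂ (algebraMap (𝒜 0) F) u) := by
  intro r
  induction r using DirectSum.Decomposition.inductionOn 𝒜 with
  | zero => exact ⟨0, map_zero _⟩
  | @homogeneous i a =>
    by_cases ha : (a : F) = 0
    · exact ⟨0, by rw [map_zero, ha]⟩
    obtain ⟨k, rfl⟩ := hdvd i a a.2 ha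
    have hc : ((u ^ (-k) : Fˣ) : F) * a ∈ 𝒜 0 := by
      simpa [mul_comm] using SetLike.GradedMul.mul_mem (Units.zpow_mem_graded 𝒜 u hu (-k)) a.2
    refine ⟨C ⟨_, hc⟩ * T k, ?_⟩
    rw [eval₂_C_mul_T, SetLike.GradeZero.algebraMap_apply, mul_right_comm, ← Units.val_mul,
      ← zpow_add, neg_add_cancel, zpow_zero, Units.val_one, one_mul]
  | add r s hr hs =>
    obtain ⟨p, rfl⟩ := hr
    obtain ⟨q, rfl⟩ := hs
    exact ⟨p + q, map_add _ p q⟩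

end LaurentPolynomial

/-- **Graded fields.** If every nonzero homogeneous element of a commutative ℤ-graded ring `F`
is invertible, then `F₀` is a field, and either `F` is concentrated in degree zero, or there is
`d > 0` and `x ∈ F_d` with `F ≅ F₀[x, x⁻¹]` as a graded ring (the isomorphism with the Laurent
polynomial ring sends `C c` to `c` and `T 1` to `x`, hence respects the grading with `deg x = d`);
moreover `d` is then the least positive degree in which `F` is nonzero. -/
theorem stmt_0 {F : Type*} [CommRing F] [Nontrivial F]
    (𝒜 : ℤ → AddSubgroup F) [GradedRing 𝒜]
    (h : ∀ a : F, a ≠ 0 → SetLike.IsHomogeneousElem 𝒜 a → IsUnit a) :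
    IsField (𝒜 0) ∧
      ((∀ i : ℤ, i ≠ 0 → ∀ a ∈ 𝒜 i, a = 0) ∨
        ∃ d : ℤ, 0 < d ∧ ∃ x ∈ 𝒜 d, x ≠ 0 ∧
          (∀ i : ℤ, 0 < i → i < d → ∀ a ∈ 𝒜 i, a = 0) ∧
          ∃ e : LaurentPolynomial (𝒜 0) ≃+* F,
            (∀ c : 𝒜 0, e (LaurentPolynomial.C c) = (c : F)) ∧
              e (LaurentPolynomial.T 1) = x) := by
  refine ⟨isField_gradeZero 𝒜 h, ?_⟩
  obtain ⟨d, hd0, hS⟩ := Int.exists_nonneg_eq_zmultiples (nonzeroDegrees 𝒜 h)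
  have hdvd : ∀ i, ∀ a ∈ 𝒜 i, a ≠ 0 → d ∣ i := fun i a ha ha0 => by
    rw [← Int.mem_zmultiples_iff, ← hS, mem_nonzeroDegrees]
    exact ⟨a, ha, ha0⟩
  rcases hd0.eq_or_lt with rfl | hd
  · exact .inl fun i hi a ha => by_contra fun ha0 => hi (zero_dvd_iff.1 (hdvd i a ha ha0))
  obtain ⟨x, hx, hx0⟩ : ∃ x ∈ 𝒜 d, x ≠ 0 := by
    rw [← mem_nonzeroDegrees 𝒜 h, hS]
    exact AddSubgroup.mem_zmultiples d
  obtain ⟨u, rfl⟩ := h x hx0 ⟨d, hx⟩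
  refine .inr ⟨d, hd, u, hx, hx0,
    fun i hi hid a ha => by_contra fun ha0 => (Int.le_of_dvd hi (hdvd i a ha ha0)).not_gt hid,
    RingEquiv.ofBijective _ ⟨LaurentPolynomial.eval₂_injective_of_mem_graded 𝒜 u hx hd.ne',
      LaurentPolynomial.eval₂_surjective_of_mem_graded 𝒜 u hx hdvd⟩,
    LaurentPolynomial.eval₂_C _ _, (LaurentPolynomial.eval₂_T _ _ 1).trans (by rw [zpow_one])⟩
end

section
/- Let A be a Noetherian ℤ-graded commutative ring and M a finitely generated graded A-module. Then the following are equivalent: (a) M satisfies the descending chain condition on graded submodules; (b) M has finite *length (i.e., a *composition series exists); (c) the set of graded prime ideals containing Ann_A(M) consists of finitely many ideals, each of which is maximal among proper graded ideals of A. -/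
open DirectSum

section
variable {A M : Type*} [CommRing A] [AddCommGroup M] [Module A M]

/-- A submodule of a graded module is graded if it is stable under taking homogeneous
components. -/
def IsGradedSubmodule (ℳ : ℤ → AddSubgroup M) [DirectSum.Decomposition ℳ]
    (N : Submodule A M) : Prop :=
  ∀ (i : ℤ) (m : M), m ∈ N → (DirectSum.decompose ℳ m i : M) ∈ N

/-- A *composition series of length `n` for a graded module. -/
def IsStarCompositionSeries (ℳ : ℤ → AddSubgroup M) [DirectSum.Decomposition ℳ]
    {n : ℕ} (c : Fin (n + 1) → Submodule A M) : Prop :=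
  StrictMono c ∧ c 0 = ⊥ ∧ c (Fin.last n) = ⊤ ∧ (∀ i, IsGradedSubmodule ℳ (c i)) ∧
    ∀ i : Fin n, ∀ N : Submodule A M, IsGradedSubmodule ℳ N →
      c i.castSucc ≤ N → N ≤ c i.succ → N = c i.castSucc ∨ N = c i.succ

/-- A proper graded ideal that is maximal among proper graded ideals. -/
def IsStarMaximal {A : Type*} [CommRing A] (𝒜 : ℤ → AddSubgroup A) [GradedRing 𝒜]
    (I : Ideal A) : Prop :=
  Ideal.IsHomogeneous 𝒜 I ∧ I ≠ ⊤ ∧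
    ∀ J : Ideal A, Ideal.IsHomogeneous 𝒜 J → I ≤ J → J = I ∨ J = ⊤

/-!
Graded submodules of `M` form a modular sublattice of all submodules, with the ascending chain
condition since `M` is Noetherian. In such a lattice the DCC amounts to a finite chain of covers
from `⊥` to `⊤`: the DCC provides a cover above every non-top element, and conversely
`x ↦ (x ⊓ P, x ⊔ P)` carries the DCC up along each cover `P ⋖ T`.

For graded `N` and homogeneous `m ∉ N`, the step `N ⋖ N + A m` is a cover exactly when the colon
ideal `(N : m)` is *maximal. A graded prime over `Ann M` contains the colon ideal of some step of a
*composition series, hence equals it: this is (b) ⇒ (c). Conversely a maximal member of the family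
`(N : m)` is a graded prime over `Ann M`, hence *maximal under (c); so every proper graded
submodule has a cover, and the ACC turns these covers into a *composition series.
-/

theorem wellFoundedLT_Iic_of_covBy {α : Type*} [Lattice α] [IsModularLattice α] {P T : α}
    (h : P ⋖ T) [WellFoundedLT (Set.Iic P)] : WellFoundedLT (Set.Iic T) := by
  have : Finite (Set.Icc P T) := by rw [h.Icc_eq]; exact Set.toFinite _
  exact StrictMono.wellFoundedLT (β := Set.Iic P × Set.Icc P T)
    (f := fun x => (⟨x ⊓ P, inf_le_right⟩, ⟨x ⊔ P, le_sup_right, sup_le x.2 h.le⟩))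
    fun x y hxy => strictMono_inf_prod_sup (z := P) (Subtype.coe_lt_coe.mpr hxy)

theorem wellFoundedLT_of_covBy_series {α : Type*} [Lattice α] [BoundedOrder α]
    [IsModularLattice α] {n : ℕ} (s : Fin (n + 1) → α) (h0 : s 0 = ⊥)
    (hn : s (Fin.last n) = ⊤) (hs : ∀ i : Fin n, s i.castSucc ⋖ s i.succ) :
    WellFoundedLT α := by
  have hIic : ∀ i, WellFoundedLT (Set.Iic (s i)) := by
    refine Fin.induction ?_ fun i ih => wellFoundedLT_Iic_of_covBy (hs i)
    rw [h0, Set.Iic_bot]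
    infer_instance
  have := hIic (Fin.last n)
  rw [hn] at this
  exact OrderIso.IicTop.symm.strictMono.wellFoundedLT

theorem exists_covBy_series {α : Type*} [PartialOrder α] [BoundedOrder α] [WellFoundedGT α]
    (hcov : ∀ a : α, a ≠ ⊤ → ∃ b, a ⋖ b) :
    ∃ (n : ℕ) (s : Fin (n + 1) → α), s 0 = ⊥ ∧ s (Fin.last n) = ⊤ ∧
      ∀ i : Fin n, s i.castSucc ⋖ s i.succ := by
  classical
  choose next hnext using hcov
  let a : ℕ → α := Nat.rec ⊥ fun _ x => if hx : x = ⊤ then x else next x hx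
  have cov : ∀ k, a k ≠ ⊤ → a k ⋖ a (k + 1) := fun k hk => by
    change a k ⋖ if hx : a k = ⊤ then a k else next (a k) hx
    rw [dif_neg hk]
    exact hnext _ hk
  have hfin : ∃ n, a n = ⊤ := by
    by_contra! h
    exact (RelEmbedding.natGT a fun k => (cov k (h k)).lt).not_wellFounded wellFounded_gt
  obtain ⟨n, hn, hmin⟩ := wellFounded_lt.has_min {n | a n = ⊤} hfin
  exact ⟨n, fun i => a i, rfl, hn, fun i => cov i fun h => hmin i h i.2⟩

theorem exists_homogeneous_mem_notMem {ι σ R P : Type*} [DecidableEq ι] [AddCommMonoid R]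
    [SetLike σ R] [AddSubmonoidClass σ R] (ℳ : ι → σ) [DirectSum.Decomposition ℳ]
    [SetLike P R] [LE P] [IsConcreteLE P R] [AddSubmonoidClass P R] {N K : P}
    (hN : SetLike.IsHomogeneous ℳ N) (hK : SetLike.IsHomogeneous ℳ K) (h : ¬ K ≤ N) :
    ∃ j, ∃ x ∈ ℳ j, x ∈ K ∧ x ∉ N := by
  obtain ⟨x, hxK, hxN⟩ := SetLike.not_le_iff_exists.mp h
  obtain ⟨j, hj⟩ := not_forall.mp (mt (AddSubmonoidClass.IsHomogeneous.mem_iff ℳ N hN).mpr hxN)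
  exact ⟨j, _, SetLike.coe_mem _, hK j hxK, hj⟩

theorem Submodule.colon_sup_span_singleton {R M : Type*} [CommRing R] [AddCommGroup M]
    [Module R M] (N : Submodule R M) (m : M) :
    N.colon (N ⊔ span R {m} : Submodule R M) = N.colon {m} := by
  rw [← span_eq N, ← span_union, colon_span, span_eq, colon_union,
    (colon_eq_top_iff_subset _).mpr subset_rfl, top_inf_eq]

theorem Submodule.exists_colon_le_of_annihilator_le {R M : Type*} [CommRing R] [AddCommGroup M]
    [Module R M] {n : ℕ} (c : Fin (n + 1) → Submodule R M) (h0 : c 0 = ⊥)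
    (hn : c (Fin.last n) = ⊤) {𝔭 : Ideal R} (hp : 𝔭.IsPrime)
    (hann : Module.annihilator R M ≤ 𝔭) :
    ∃ i : Fin n, (c i.castSucc).colon (c i.succ) ≤ 𝔭 := by
  by_contra! h
  choose b hb hb𝔭 using fun i => SetLike.not_le_iff_exists.mp (h i)
  have hkill : ∀ i, ∃ a ∉ 𝔭, ∀ x ∈ c i, a • x = 0 := by
    refine Fin.induction ⟨1, hp.one_notMem, fun x hx => ?_⟩ fun i ⟨a, ha, hax⟩ =>
      ⟨a * b i, hp.mul_notMem ha (hb𝔭 i), fun x hx => ?_⟩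
    · rw [h0, mem_bot] at hx
      simp [hx]
    · rw [mul_smul]
      exact hax _ (mem_colon.mp (hb i) x hx)
  obtain ⟨a, ha, hax⟩ := hkill (Fin.last n)
  exact ha (hann (Module.mem_annihilator.mpr fun x => hax x (hn ▸ mem_top)))

section GradedSubmodule
variable {ℳ : ℤ → AddSubgroup M} [DirectSum.Decomposition ℳ]

theorem isGradedSubmodule_bot : IsGradedSubmodule ℳ (⊥ : Submodule A M) := by
  intro i m hm
  simp [(Submodule.mem_bot A).mp hm]

theorem isGradedSubmodule_top : IsGradedSubmodule ℳ (⊤ : Submodule A M) :=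
  fun _ _ _ => trivial

theorem IsGradedSubmodule.inf {N K : Submodule A M} (hN : IsGradedSubmodule ℳ N)
    (hK : IsGradedSubmodule ℳ K) : IsGradedSubmodule ℳ (N ⊓ K) :=
  fun i m hm => ⟨hN i m hm.1, hK i m hm.2⟩

theorem IsGradedSubmodule.sup {N K : Submodule A M} (hN : IsGradedSubmodule ℳ N)
    (hK : IsGradedSubmodule ℳ K) : IsGradedSubmodule ℳ (N ⊔ K) := by
  intro i m hm
  obtain ⟨x, hx, y, hy, rfl⟩ := Submodule.mem_sup.mp hm
  rw [decompose_add, DirectSum.add_apply, AddSubgroup.coe_add]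
  exact Submodule.add_mem_sup (hN i x hx) (hK i y hy)

variable (A ℳ) in
def gradedSubmodules : Sublattice (Submodule A M) where
  carrier := {N | IsGradedSubmodule ℳ N}
  supClosed' _ hN _ hK := hN.sup hK
  infClosed' _ hN _ hK := hN.inf hK

instance : BoundedOrder (gradedSubmodules A ℳ) :=
  Subtype.boundedOrder isGradedSubmodule_bot isGradedSubmodule_top

instance : IsModularLattice (gradedSubmodules A ℳ) :=
  ⟨fun {_} y {_} h => sup_inf_le_assoc_of_le (y : Submodule A M) (Subtype.coe_le_coe.mpr h)⟩

theorem dcc_iff_wellFoundedLT :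
    (∀ f : ℕ → Submodule A M, (∀ k, IsGradedSubmodule ℳ (f k)) →
        (∀ k, f (k + 1) ≤ f k) → ∃ N, ∀ k, N ≤ k → f k = f N) ↔
      WellFoundedLT (gradedSubmodules A ℳ) := by
  constructor
  · intro h
    refine (wellFoundedGT_iff_monotone_chain_condition (α := (gradedSubmodules A ℳ)ᵒᵈ)).mpr
      fun a => ?_
    obtain ⟨n, hn⟩ := h (fun k => ((OrderDual.ofDual (a k) : gradedSubmodules A ℳ) : Submodule A M))
      (fun k => (a k).2)
      fun k => a.monotone k.le_succ
    exact ⟨n, fun k hk => Subtype.ext (hn k hk).symm⟩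
  · intro _ f hf hanti
    obtain ⟨n, hn⟩ := WellFoundedLT.antitone_chain_condition
      (f := fun k => (⟨f k, hf k⟩ : gradedSubmodules A ℳ)) (antitone_nat_of_succ_le hanti)
    exact ⟨n, fun k hk => congrArg Subtype.val (hn k hk).symm⟩

theorem exists_isStarCompositionSeries_iff :
    (∃ (n : ℕ) (c : Fin (n + 1) → Submodule A M), IsStarCompositionSeries ℳ c) ↔
      ∃ (n : ℕ) (s : Fin (n + 1) → gradedSubmodules A ℳ), s 0 = ⊥ ∧ s (Fin.last n) = ⊤ ∧
        ∀ i : Fin n, s i.castSucc ⋖ s i.succ := by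
  constructor
  · rintro ⟨n, c, hmono, h0, hn, hc, hcov⟩
    refine ⟨n, fun i => ⟨c i, hc i⟩, Subtype.ext h0, Subtype.ext hn, fun i =>
      covBy_iff_lt_and_eq_or_eq.mpr ⟨hmono i.castSucc_lt_succ, fun K h1 h2 => ?_⟩⟩
    simpa only [Subtype.ext_iff] using hcov i K K.2 h1 h2
  · rintro ⟨n, s, h0, hn, hs⟩
    refine ⟨n, fun i => s i, Fin.strictMono_iff_lt_succ.mpr fun i => (hs i).lt,
      congrArg Subtype.val h0, congrArg Subtype.val hn, fun i => (s i).2, fun i K hK h1 h2 => ?_⟩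
    simpa only [Subtype.ext_iff] using (hs i).eq_or_eq (c := ⟨K, hK⟩) h1 h2

theorem coe_decompose_smul_of_mem (𝒜 : ℤ → AddSubgroup A) [GradedRing 𝒜]
    [SetLike.GradedSMul 𝒜 ℳ] {m : M} {j : ℤ} (hm : m ∈ ℳ j) (a : A) (i : ℤ) :
    (decompose ℳ (a • m) (i + j) : M) = (decompose 𝒜 a i : A) • m := by
  induction a using DirectSum.Decomposition.inductionOn 𝒜 with
  | zero => simp
  | @homogeneous k a =>
    rw [decompose_of_mem ℳ (SetLike.GradedSMul.smul_mem a.2 hm), decompose_coe,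
      coe_of_apply, coe_of_apply]
    by_cases hki : k = i <;> simp [hki]
  | add a b ha hb => simp [add_smul, ha, hb]

theorem isGradedSubmodule_span_singleton (𝒜 : ℤ → AddSubgroup A) [GradedRing 𝒜]
    [SetLike.GradedSMul 𝒜 ℳ] {m : M} {j : ℤ} (hm : m ∈ ℳ j) :
    IsGradedSubmodule ℳ (Submodule.span A {m}) := by
  intro i x hx
  obtain ⟨a, rfl⟩ := Submodule.mem_span_singleton.mp hx
  rw [← sub_add_cancel i j, coe_decompose_smul_of_mem 𝒜 hm]
  exact Submodule.smul_mem _ _ (Submodule.mem_span_singleton_self m)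

variable (𝒜 : ℤ → AddSubgroup A) [GradedRing 𝒜] [SetLike.GradedSMul 𝒜 ℳ]

theorem isHomogeneous_colon_singleton {N : Submodule A M} (hN : IsGradedSubmodule ℳ N)
    {m : M} {j : ℤ} (hm : m ∈ ℳ j) : (N.colon {m}).IsHomogeneous 𝒜 := by
  intro i a ha
  rw [Submodule.mem_colon_singleton] at ha ⊢
  rw [← coe_decompose_smul_of_mem 𝒜 hm]
  exact hN _ _ ha

open Submodule in
theorem covBy_sup_span_singleton_iff {N : gradedSubmodules A ℳ} {m : M} {j : ℤ}
    (hm : m ∈ ℳ j) (hmN : m ∉ (N : Submodule A M)) :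
    N ⋖ N ⊔ ⟨span A {m}, isGradedSubmodule_span_singleton 𝒜 hm⟩ ↔
      IsStarMaximal 𝒜 ((N : Submodule A M).colon {m}) := by
  have hmN' : m ∈ ((N ⊔ ⟨span A {m}, isGradedSubmodule_span_singleton 𝒜 hm⟩ :
      gradedSubmodules A ℳ) : Submodule A M) :=
    mem_sup_right (mem_span_singleton_self m)
  constructor
  · intro hcov
    refine ⟨isHomogeneous_colon_singleton 𝒜 N.2 hm, fun h => hmN ?_, fun J hJ hNJ => ?_⟩
    · exact (colon_eq_top_iff_subset _).mp h rfl
    by_contra! hJ'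
    obtain ⟨k, b, hbk, hbJ, hbN⟩ := exists_homogeneous_mem_notMem 𝒜
      (isHomogeneous_colon_singleton 𝒜 N.2 hm) hJ fun h => hJ'.1 (le_antisymm h hNJ)
    rw [mem_colon_singleton] at hbN
    have hbm : b • m ∈ ℳ (k + j) := SetLike.GradedSMul.smul_mem hbk hm
    have hle : (⟨span A {b • m}, isGradedSubmodule_span_singleton 𝒜 hbm⟩ : gradedSubmodules A ℳ) ≤
        ⟨span A {m}, isGradedSubmodule_span_singleton 𝒜 hm⟩ :=
      (span_singleton_le_iff_mem _ _).mpr (smul_mem _ _ (mem_span_singleton_self m))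
    have hmb : m ∈ (N : Submodule A M) ⊔ span A {b • m} := by
      rcases hcov.eq_or_eq le_sup_left (sup_le_sup_left hle N) with h | h
      · exact absurd (congrArg Subtype.val h ▸ mem_sup_right (mem_span_singleton_self _)) hbN
      · rw [← h] at hmN'
        exact hmN'
    obtain ⟨p, hp, y, hy, hpy⟩ := mem_sup.mp hmb
    obtain ⟨r, rfl⟩ := mem_span_singleton.mp hy
    have h1 : 1 - r * b ∈ (N : Submodule A M).colon {m} := by
      rw [mem_colon_singleton, sub_smul, one_smul, mul_smul]
      nth_rw 1 [← hpy]
      simpa using hp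
    exact hJ'.2 (J.eq_top_iff_one.mpr (by simpa using J.add_mem (hNJ h1) (J.mul_mem_left r hbJ)))
  · intro hmax
    refine covBy_iff_lt_and_eq_or_eq.mpr
      ⟨lt_of_le_of_ne le_sup_left fun h => hmN ?_, fun K hNK hKN => ?_⟩
    · exact congrArg Subtype.val h ▸ hmN'
    by_contra! hK
    obtain ⟨x, hxK, hxN⟩ := SetLike.not_le_iff_exists.mp fun h : (K : Submodule A M) ≤ N =>
      hK.1 (le_antisymm h hNK)
    obtain ⟨p, hp, y, hy, rfl⟩ := mem_sup.mp (hKN hxK)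
    obtain ⟨r, rfl⟩ := mem_span_singleton.mp hy
    have hrK : r ∈ (K : Submodule A M).colon {m} := by
      rw [mem_colon_singleton]
      simpa using sub_mem hxK (hNK hp)
    have hrN : r ∉ (N : Submodule A M).colon {m} := fun h =>
      hxN (add_mem hp (mem_colon_singleton.mp h))
    rcases hmax.2.2 _ (isHomogeneous_colon_singleton 𝒜 K.2 hm) (colon_mono hNK subset_rfl)
      with h | h
    · exact hrN (h ▸ hrK)
    · have hmK := (colon_eq_top_iff_subset _).mp h rfl
      exact hK.2 (le_antisymm hKN (sup_le hNK ((span_singleton_le_iff_mem _ _).mpr hmK)))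

open Submodule in
theorem isStarMaximal_colon_of_covBy {P Q : gradedSubmodules A ℳ} (h : P ⋖ Q) :
    IsStarMaximal 𝒜 ((P : Submodule A M).colon (Q : Submodule A M)) := by
  obtain ⟨j, q, hq, hqQ, hqP⟩ := exists_homogeneous_mem_notMem ℳ P.2 Q.2 h.lt.not_ge
  have hQ : P ⊔ ⟨span A {q}, isGradedSubmodule_span_singleton 𝒜 hq⟩ = Q := by
    refine (h.eq_or_eq le_sup_left (sup_le h.le ((span_singleton_le_iff_mem _ _).mpr hqQ)))
      |>.resolve_left fun e => hqP ?_
    rw [← e]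
    exact mem_sup_right (mem_span_singleton_self q)
  have hcolon : (P : Submodule A M).colon (Q : Submodule A M) = (P : Submodule A M).colon {q} := by
    rw [← hQ]
    exact colon_sup_span_singleton _ _
  rw [hcolon]
  exact (covBy_sup_span_singleton_iff 𝒜 hq hqP).mp (hQ ▸ h)

theorem finite_and_isStarMaximal_of_covBy_series {n : ℕ} (s : Fin (n + 1) → gradedSubmodules A ℳ)
    (h0 : s 0 = ⊥) (hn : s (Fin.last n) = ⊤) (hs : ∀ i : Fin n, s i.castSucc ⋖ s i.succ) :
    {𝔭 : Ideal A | 𝔭.IsPrime ∧ 𝔭.IsHomogeneous 𝒜 ∧ Module.annihilator A M ≤ 𝔭}.Finite ∧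
      ∀ 𝔭 : Ideal A, 𝔭.IsPrime → 𝔭.IsHomogeneous 𝒜 → Module.annihilator A M ≤ 𝔭 →
        IsStarMaximal 𝒜 𝔭 := by
  have key : ∀ 𝔭 : Ideal A, 𝔭.IsPrime → 𝔭.IsHomogeneous 𝒜 → Module.annihilator A M ≤ 𝔭 →
      ∃ i : Fin n, (s i.castSucc : Submodule A M).colon (s i.succ : Submodule A M) = 𝔭 := by
    intro 𝔭 hp hh hann
    obtain ⟨i, hi⟩ := Submodule.exists_colon_le_of_annihilator_le (fun i => (s i : Submodule A M))
      (congrArg Subtype.val h0) (congrArg Subtype.val hn) hp hann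
    exact ⟨i, (((isStarMaximal_colon_of_covBy 𝒜 (hs i)).2.2 𝔭 hh hi).resolve_right hp.ne_top).symm⟩
  refine ⟨(Set.finite_range _).subset fun 𝔭 ⟨hp, hh, hann⟩ => key 𝔭 hp hh hann,
    fun 𝔭 hp hh hann => ?_⟩
  obtain ⟨i, rfl⟩ := key 𝔭 hp hh hann
  exact isStarMaximal_colon_of_covBy 𝒜 (hs i)

end GradedSubmodule

theorem exists_isPrime_colon_singleton (𝒜 : ℤ → AddSubgroup A) [GradedRing 𝒜] [IsNoetherianRing A]
    {ℳ : ℤ → AddSubgroup M} [DirectSum.Decomposition ℳ] [SetLike.GradedSMul 𝒜 ℳ] {N : Submodule A M}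
    (hN : IsGradedSubmodule ℳ N) (hNT : N ≠ ⊤) :
    ∃ j, ∃ m ∈ ℳ j, m ∉ N ∧ (N.colon {m}).IsPrime := by
  let S : Set (Ideal A) := {I | ∃ j, ∃ m ∈ ℳ j, m ∉ N ∧ N.colon {m} = I}
  have hS : S.Nonempty := by
    obtain ⟨j, m, hm, -, hmN⟩ :=
      exists_homogeneous_mem_notMem ℳ hN isGradedSubmodule_top fun h => hNT (top_le_iff.mp h)
    exact ⟨_, j, m, hm, hmN, rfl⟩
  obtain ⟨_, ⟨j, m, hm, hmN, rfl⟩, hmax⟩ := set_has_maximal_iff_noetherian.mpr inferInstance S hS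
  refine ⟨j, m, hm, hmN, (isHomogeneous_colon_singleton 𝒜 hN hm).isPrime_of_homogeneous_mem_or_mem
    (fun h => hmN ((Submodule.colon_eq_top_iff_subset _).mp h rfl)) ?_⟩
  rintro x y - ⟨k, hy⟩ hxy
  by_cases hyN : y • m ∈ N
  · exact Or.inr (Submodule.mem_colon_singleton.mpr hyN)
  have hle : N.colon {m} ≤ N.colon {y • m} := fun a ha => by
    rw [Submodule.mem_colon_singleton] at ha ⊢
    rw [smul_comm]
    exact N.smul_mem y ha
  have heq := eq_of_le_of_not_lt hle
    (hmax _ ⟨_, _, SetLike.GradedSMul.smul_mem hy hm, hyN, rfl⟩)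
  left
  rw [heq, Submodule.mem_colon_singleton, ← mul_smul]
  exact Submodule.mem_colon_singleton.mp hxy

theorem exists_covBy_of_isStarMaximal (𝒜 : ℤ → AddSubgroup A) [GradedRing 𝒜] [IsNoetherianRing A]
    {ℳ : ℤ → AddSubgroup M} [DirectSum.Decomposition ℳ] [SetLike.GradedSMul 𝒜 ℳ]
    (hmax : ∀ 𝔭 : Ideal A, 𝔭.IsPrime → 𝔭.IsHomogeneous 𝒜 → Module.annihilator A M ≤ 𝔭 →
      IsStarMaximal 𝒜 𝔭)
    (N : gradedSubmodules A ℳ) (hN : N ≠ ⊤) : ∃ N', N ⋖ N' := by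
  obtain ⟨j, m, hm, hmN, hp⟩ := exists_isPrime_colon_singleton 𝒜 N.2 fun h => hN (Subtype.ext h)
  refine ⟨_, (covBy_sup_span_singleton_iff 𝒜 hm hmN).mpr
    (hmax _ hp (isHomogeneous_colon_singleton 𝒜 N.2 hm) fun a ha => ?_)⟩
  rw [Submodule.mem_colon_singleton, Module.mem_annihilator.mp ha]
  exact zero_mem _

/-- For `A` a Noetherian ℤ-graded ring and `M` a finitely generated graded `A`-module, the
following are equivalent: (a) `M` has the DCC on graded submodules; (b) `M` has a *composition
series; (c) the graded primes containing `Ann_A(M)` form a finite set of *maximal ideals. -/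
theorem stmt_4 (𝒜 : ℤ → AddSubgroup A) [GradedRing 𝒜] [IsNoetherianRing A]
    (ℳ : ℤ → AddSubgroup M) [DirectSum.Decomposition ℳ] [SetLike.GradedSMul 𝒜 ℳ]
    [Module.Finite A M] :
    ((∀ f : ℕ → Submodule A M, (∀ k, IsGradedSubmodule ℳ (f k)) →
        (∀ k, f (k + 1) ≤ f k) → ∃ N, ∀ k, N ≤ k → f k = f N) ↔
      (∃ (n : ℕ) (c : Fin (n + 1) → Submodule A M), IsStarCompositionSeries ℳ c)) ∧
    ((∃ (n : ℕ) (c : Fin (n + 1) → Submodule A M), IsStarCompositionSeries ℳ c) ↔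
      ({𝔭 : Ideal A | 𝔭.IsPrime ∧ Ideal.IsHomogeneous 𝒜 𝔭 ∧
          Module.annihilator A M ≤ 𝔭}.Finite ∧
        ∀ 𝔭 : Ideal A, 𝔭.IsPrime → Ideal.IsHomogeneous 𝒜 𝔭 →
          Module.annihilator A M ≤ 𝔭 → IsStarMaximal 𝒜 𝔭)) := by
  rw [dcc_iff_wellFoundedLT, exists_isStarCompositionSeries_iff]
  refine ⟨⟨fun _ => exists_covBy_series fun N hN => ?_, fun ⟨_, s, h0, hn, hs⟩ => ?_⟩,
    ⟨fun ⟨_, s, h0, hn, hs⟩ => ?_, fun ⟨_, hmax⟩ => ?_⟩⟩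
  · exact exists_covBy_of_wellFoundedLT (not_isMax_iff_ne_top.mpr hN)
  · exact wellFoundedLT_of_covBy_series s h0 hn hs
  · exact finite_and_isStarMaximal_of_covBy_series 𝒜 s h0 hn hs
  · exact exists_covBy_series (exists_covBy_of_isStarMaximal 𝒜 hmax)
end
end

section
/- Let S be a positively graded Noetherian commutative ring and M a finitely generated graded S-module with finite *length. Then the *length of M equals the ordinary (ungraded) length of M as an S-module. -/
/-
If `P < T` are graded with nothing graded strictly between them, pick `t ∈ T \ P` homogeneous of
degree `d`; then `P + A t` is graded, so it equals `T`. For `a` homogeneous of positive degree,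
`P + A (a t)` is graded but has its degree-`d` part in `P`, because `A` has no negative degrees;
so it cannot contain `t` and must be `P`, i.e. `a t ∈ P`. Hence every element of `T` is congruent
modulo `P` to its degree-`d` component, and any `N` with `P < N ≤ T` contains a homogeneous
element outside `P`, hence all of `T`.
-/

open DirectSum

section
variable {A M : Type*} [CommRing A] [AddCommGroup M] [Module A M]

section Graded

variable {ℳ : ℤ → AddSubgroup M} [DirectSum.Decomposition ℳ]

theorem Submodule.mem_of_forall_decompose_mem {P : Submodule A M} {x : M}
    (h : ∀ j, (decompose ℳ x j : M) ∈ P) : x ∈ P := by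
  classical
  rw [← sum_support_decompose ℳ x]
  exact P.sum_mem fun j _ => h j

theorem Submodule.sub_decompose_mem_of_forall_ne {P : Submodule A M} {x : M} {d : ℤ}
    (h : ∀ j ≠ d, (decompose ℳ x j : M) ∈ P) : x - decompose ℳ x d ∈ P := by
  refine P.mem_of_forall_decompose_mem (ℳ := ℳ) fun j => ?_
  rw [decompose_sub, DirectSum.sub_apply, AddSubgroup.coe_sub]
  by_cases hj : j = d
  · subst hj
    rw [decompose_of_mem_same ℳ (SetLike.coe_mem _), sub_self]
    exact P.zero_mem
  · rw [decompose_of_mem_ne ℳ (SetLike.coe_mem _) (Ne.symm hj), sub_zero]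
    exact h j hj

variable (𝒜 : ℤ → AddSubgroup A) [GradedRing 𝒜] [SetLike.GradedSMul 𝒜 ℳ]

theorem coe_decompose_smul_of_mem_s5 (r : A) {m : M} {e : ℤ} (hm : m ∈ ℳ e) (j : ℤ) :
    (decompose ℳ (r • m) j : M) = (decompose 𝒜 r (j - e) : A) • m := by
  induction r using DirectSum.Decomposition.inductionOn 𝒜 with
  | zero => simp
  | @homogeneous k a =>
    obtain ⟨a, ha⟩ := a
    have hak : (a : A) • m ∈ ℳ (k + e) := SetLike.GradedSMul.smul_mem ha hm
    by_cases hk : k = j - e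
    · subst hk
      rw [decompose_of_mem_same 𝒜 ha, decompose_of_mem_same ℳ (by simpa using hak)]
    · rw [decompose_of_mem_ne ℳ hak (by omega), decompose_of_mem_ne 𝒜 ha hk, zero_smul]
  | add r s hr hs =>
    simp only [add_smul, decompose_add, DirectSum.add_apply, AddSubgroup.coe_add, hr, hs]

theorem Submodule.exists_decompose_eq_of_mem_sup_span_singleton {P : Submodule A M}
    {u x : M} {e : ℤ} (hu : u ∈ ℳ e) (hx : x ∈ P ⊔ A ∙ u) :
    ∃ p ∈ P, ∃ r : A, ∀ j,
      (decompose ℳ x j : M) = decompose ℳ p j + (decompose 𝒜 r (j - e) : A) • u := by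
  obtain ⟨p, hp, q, hq, rfl⟩ := Submodule.mem_sup.1 hx
  obtain ⟨r, rfl⟩ := Submodule.mem_span_singleton.1 hq
  refine ⟨p, hp, r, fun j => ?_⟩
  rw [decompose_add, DirectSum.add_apply, AddSubgroup.coe_add,
    coe_decompose_smul_of_mem_s5 𝒜 r hu]

theorem IsGradedSubmodule.decompose_mem_of_mem_sup_span_singleton_of_lt
    (hpos : ∀ i : ℤ, i < 0 → ∀ a ∈ 𝒜 i, a = 0) {P : Submodule A M}
    (hP : IsGradedSubmodule ℳ P) {u x : M} {e j : ℤ} (hu : u ∈ ℳ e) (hx : x ∈ P ⊔ A ∙ u)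
    (hj : j < e) : (decompose ℳ x j : M) ∈ P := by
  obtain ⟨p, hp, r, hx⟩ := P.exists_decompose_eq_of_mem_sup_span_singleton 𝒜 hu hx
  rw [hx j, hpos (j - e) (by omega) _ (SetLike.coe_mem _), zero_smul, add_zero]
  exact hP j p hp

end Graded

theorem IsGradedSubmodule.sup_span_singleton (𝒜 : ℤ → AddSubgroup A) [GradedRing 𝒜]
    {ℳ : ℤ → AddSubgroup M} [DirectSum.Decomposition ℳ] [SetLike.GradedSMul 𝒜 ℳ]
    {P : Submodule A M} (hP : IsGradedSubmodule ℳ P) {u : M} {e : ℤ} (hu : u ∈ ℳ e) :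
    IsGradedSubmodule ℳ (P ⊔ A ∙ u) := by
  intro j x hx
  obtain ⟨p, hp, r, hx⟩ := P.exists_decompose_eq_of_mem_sup_span_singleton 𝒜 hu hx
  rw [hx j]
  exact add_mem (Submodule.mem_sup_left (hP j p hp))
    (Submodule.mem_sup_right (Submodule.smul_mem _ _ (Submodule.mem_span_singleton_self u)))

structure IsGradedCovBy (ℳ : ℤ → AddSubgroup M) [DirectSum.Decomposition ℳ]
    (P T : Submodule A M) : Prop where
  left_graded : IsGradedSubmodule ℳ P
  right_graded : IsGradedSubmodule ℳ T
  lt : P < T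
  eq_or_eq : ∀ N : Submodule A M, IsGradedSubmodule ℳ N → P ≤ N → N ≤ T → N = P ∨ N = T

theorem IsStarCompositionSeries.isGradedCovBy {ℳ : ℤ → AddSubgroup M}
    [DirectSum.Decomposition ℳ] {n : ℕ} {c : Fin (n + 1) → Submodule A M}
    (hc : IsStarCompositionSeries ℳ c) (i : Fin n) :
    IsGradedCovBy ℳ (c i.castSucc) (c i.succ) :=
  ⟨hc.2.2.2.1 _, hc.2.2.2.1 _, hc.1 Fin.castSucc_lt_succ, hc.2.2.2.2 i⟩

namespace IsGradedCovBy

variable {ℳ : ℤ → AddSubgroup M} [DirectSum.Decomposition ℳ] {P T : Submodule A M}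

theorem exists_homogeneous_mem_notMem (h : IsGradedCovBy ℳ P T) :
    ∃ d, ∃ t ∈ ℳ d, t ∈ T ∧ t ∉ P := by
  obtain ⟨x, hxT, hxP⟩ := SetLike.exists_of_lt h.lt
  by_contra! hne
  exact hxP (P.mem_of_forall_decompose_mem fun j =>
    hne j _ (SetLike.coe_mem _) (h.right_graded j x hxT))

theorem sup_span_singleton_eq (𝒜 : ℤ → AddSubgroup A) [GradedRing 𝒜] [SetLike.GradedSMul 𝒜 ℳ]
    (h : IsGradedCovBy ℳ P T) {u : M} {e : ℤ} (hu : u ∈ ℳ e)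
    (huT : u ∈ T) (huP : u ∉ P) : P ⊔ A ∙ u = T := by
  refine (h.eq_or_eq _ (h.left_graded.sup_span_singleton 𝒜 hu) le_sup_left
    (sup_le h.lt.le ((Submodule.span_singleton_le_iff_mem _ _).2 huT))).resolve_left ?_
  intro hPu
  exact huP (hPu ▸ Submodule.mem_sup_right (Submodule.mem_span_singleton_self u))

variable (𝒜 : ℤ → AddSubgroup A) [GradedRing 𝒜] [SetLike.GradedSMul 𝒜 ℳ]

theorem smul_mem_left_of_pos (hpos : ∀ i : ℤ, i < 0 → ∀ a ∈ 𝒜 i, a = 0) (h : IsGradedCovBy ℳ P T)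
    {t : M} {d : ℤ} (ht : t ∈ ℳ d) (htT : t ∈ T) (htP : t ∉ P) {a : A} {k : ℤ} (ha : a ∈ 𝒜 k)
    (hk : 0 < k) : a • t ∈ P := by
  by_contra hat
  have hat' : a • t ∈ ℳ (k + d) := SetLike.GradedSMul.smul_mem ha ht
  have htat : t ∈ P ⊔ A ∙ (a • t) := by
    rwa [h.sup_span_singleton_eq 𝒜 hat' (T.smul_mem a htT) hat]
  have htd := h.left_graded.decompose_mem_of_mem_sup_span_singleton_of_lt 𝒜 hpos hat' htat
    (show d < k + d by omega)
  exact htP (by rwa [decompose_of_mem_same ℳ ht] at htd)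

theorem decompose_mem_left_of_ne (hpos : ∀ i : ℤ, i < 0 → ∀ a ∈ 𝒜 i, a = 0)
    (h : IsGradedCovBy ℳ P T) {t : M} {d : ℤ} (ht : t ∈ ℳ d) (htT : t ∈ T) (htP : t ∉ P)
    {x : M} (hx : x ∈ T) {j : ℤ} (hj : j ≠ d) : (decompose ℳ x j : M) ∈ P := by
  rw [← h.sup_span_singleton_eq 𝒜 ht htT htP] at hx
  obtain ⟨p, hp, r, hx⟩ := P.exists_decompose_eq_of_mem_sup_span_singleton 𝒜 ht hx
  rw [hx j]
  refine add_mem (h.left_graded j p hp) ?_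
  rcases hj.lt_or_gt with hj | hj
  · rw [hpos (j - d) (by omega) _ (SetLike.coe_mem _), zero_smul]
    exact P.zero_mem
  · exact h.smul_mem_left_of_pos 𝒜 hpos ht htT htP (SetLike.coe_mem _) (by omega)

theorem covBy (hpos : ∀ i : ℤ, i < 0 → ∀ a ∈ 𝒜 i, a = 0) (h : IsGradedCovBy ℳ P T) :
    P ⋖ T := by
  obtain ⟨d, t, ht, htT, htP⟩ := h.exists_homogeneous_mem_notMem
  refine ⟨h.lt, fun N hPN hNT => hNT.not_ge ?_⟩
  obtain ⟨y, hyN, hyP⟩ := SetLike.exists_of_lt hPN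
  have hyT : y ∈ T := hNT.le hyN
  have hrest : y - decompose ℳ y d ∈ P := P.sub_decompose_mem_of_forall_ne fun j hj =>
    h.decompose_mem_left_of_ne 𝒜 hpos ht htT htP hyT hj
  have hydN : (decompose ℳ y d : M) ∈ N := by
    simpa only [sub_sub_cancel] using N.sub_mem hyN (hPN.le hrest)
  have hydP : (decompose ℳ y d : M) ∉ P := fun hyd =>
    hyP (by simpa only [sub_add_cancel] using P.add_mem hrest hyd)
  rw [← h.sup_span_singleton_eq 𝒜 (SetLike.coe_mem _) (h.right_graded d y hyT) hydP]
  exact sup_le hPN.le ((Submodule.span_singleton_le_iff_mem _ _).2 hydN)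

end IsGradedCovBy

theorem stmt_5_general (𝒜 : ℤ → AddSubgroup A) [GradedRing 𝒜]
    (hpos : ∀ i : ℤ, i < 0 → ∀ a ∈ 𝒜 i, a = 0)
    (ℳ : ℤ → AddSubgroup M) [DirectSum.Decomposition ℳ] [SetLike.GradedSMul 𝒜 ℳ]
    (n : ℕ) (c : Fin (n + 1) → Submodule A M) (hc : IsStarCompositionSeries ℳ c) :
    ∃ d : Fin (n + 1) → Submodule A M, d 0 = ⊥ ∧ d (Fin.last n) = ⊤ ∧
      ∀ i : Fin n, d i.castSucc ⋖ d i.succ :=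
  ⟨c, hc.2.1, hc.2.2.1, fun i => (hc.isGradedCovBy i).covBy 𝒜 hpos⟩

/-- **Length equals *length for positively graded rings.** If `S` is a positively graded
Noetherian ring and `M` is a finitely generated graded `S`-module with a *composition series of
length `n`, then `M` has an ordinary composition series of length `n` (each step being a
covering in the lattice of all submodules), i.e. `ℓ_S(M) = *ℓ_S(M) = n`. -/
theorem stmt_5 (𝒜 : ℤ → AddSubgroup A) [GradedRing 𝒜] [IsNoetherianRing A]
    (hpos : ∀ i : ℤ, i < 0 → ∀ a ∈ 𝒜 i, a = 0)
    (ℳ : ℤ → AddSubgroup M) [DirectSum.Decomposition ℳ] [SetLike.GradedSMul 𝒜 ℳ]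
    [Module.Finite A M]
    (n : ℕ) (c : Fin (n + 1) → Submodule A M) (hc : IsStarCompositionSeries ℳ c) :
    ∃ d : Fin (n + 1) → Submodule A M, d 0 = ⊥ ∧ d (Fin.last n) = ⊤ ∧
      ∀ i : Fin n, d i.castSucc ⋖ d i.succ :=
  stmt_5_general 𝒜 hpos ℳ n c hc
end
end

section
/- Let A be a ℤ-graded commutative ring and 𝔭, 𝔮 prime ideals of A with 𝔮 graded. Then the graded localization (A/𝔮)_{[𝔭]} is nonzero if and only if 𝔮 ⊆ 𝔭*. In particular, if 𝔭 is a minimal prime of A, then (A/𝔮)_{[𝔭]} ≠ 0 if and only if 𝔮 = 𝔭. -/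
/-!
`(A/𝔮)_{[𝔭]}` vanishes iff `1` is killed by some `s ∈ T`, i.e. iff `T` meets `𝔮`. As `𝔮` is
generated by its homogeneous elements, `T` misses `𝔮` iff `𝔮 ⊆ 𝔭`, and for homogeneous `𝔮` this
is `𝔮 ⊆ 𝔭*` because `𝔭*` is the largest homogeneous ideal inside `𝔭`. If `𝔭` is a minimal prime,
the prime `𝔮 ⊆ 𝔭` must equal `𝔭`.
-/

theorem LocalizedModule.nontrivial_quotient_iff {R : Type*} [CommRing R] (I : Ideal R)
    (S : Submonoid R) : Nontrivial (LocalizedModule S (R ⧸ I)) ↔ ∀ s ∈ S, s ∉ I := by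
  have smul_mk (s a : R) : s • Ideal.Quotient.mk I a = Ideal.Quotient.mk I (s * a) := rfl
  rw [← not_subsingleton_iff_nontrivial, LocalizedModule.subsingleton_iff]
  constructor
  · intro h s hs hsI
    refine h fun m => ⟨s, hs, ?_⟩
    obtain ⟨a, rfl⟩ := Ideal.Quotient.mk_surjective m
    rw [smul_mk, Ideal.Quotient.eq_zero_iff_mem]
    exact I.mul_mem_right a hsI
  · intro h hS
    obtain ⟨s, hs, hs1⟩ := hS 1
    rw [← map_one (Ideal.Quotient.mk I), smul_mk, mul_one, Ideal.Quotient.eq_zero_iff_mem] at hs1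
    exact h s hs hs1

section Homogeneous

variable {ι σ A : Type*} [Semiring A] [DecidableEq ι] [AddMonoid ι] [SetLike σ A]
  [AddSubmonoidClass σ A] {𝒜 : ι → σ} [GradedRing 𝒜] {I J : Ideal A}

theorem Ideal.IsHomogeneous.le_toIdeal_homogeneousCore_iff (hI : I.IsHomogeneous 𝒜) :
    I ≤ (J.homogeneousCore 𝒜).toIdeal ↔ I ≤ J :=
  (Ideal.homogeneousCore.gc 𝒜 ⟨I, hI⟩ J).symm

theorem Ideal.IsHomogeneous.le_iff_forall_homogeneous (hI : I.IsHomogeneous 𝒜) :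
    I ≤ J ↔ ∀ x ∈ I, SetLike.IsHomogeneousElem 𝒜 x → x ∈ J := by
  refine ⟨fun h x hx _ => h hx, fun h => ?_⟩
  rw [← hI.toIdeal_homogeneousCore_eq_self]
  exact Ideal.span_le.2 fun _ ⟨x, hxI, hx⟩ => hx ▸ h x hxI x.2

end Homogeneous

theorem stmt_9_general {A : Type*} [CommRing A] (𝒜 : ℤ → AddSubgroup A) [GradedRing 𝒜]
    (𝔭 𝔮 : Ideal A) [𝔮.IsPrime] (h𝔮 : Ideal.IsHomogeneous 𝒜 𝔮)
    (T : Submonoid A) (hT : (T : Set A) = {a : A | SetLike.IsHomogeneousElem 𝒜 a ∧ a ∉ 𝔭}) :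
    (Nontrivial (LocalizedModule T (A ⧸ 𝔮)) ↔ 𝔮 ≤ (Ideal.homogeneousCore 𝒜 𝔭).toIdeal) ∧
      (𝔭 ∈ minimalPrimes A →
        (Nontrivial (LocalizedModule T (A ⧸ 𝔮)) ↔ 𝔮 = 𝔭)) := by
  have nontrivial_iff : Nontrivial (LocalizedModule T (A ⧸ 𝔮)) ↔ 𝔮 ≤ 𝔭 := by
    rw [LocalizedModule.nontrivial_quotient_iff, h𝔮.le_iff_forall_homogeneous]
    simp only [← SetLike.mem_coe, hT, Set.mem_ofPred_eq, and_imp]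
    exact forall_congr' fun x => by tauto
  refine ⟨nontrivial_iff.trans h𝔮.le_toIdeal_homogeneousCore_iff.symm, fun h𝔭 => ?_⟩
  rw [nontrivial_iff]
  exact ⟨fun h => le_antisymm h (h𝔭.2 ⟨inferInstance, bot_le⟩ h), le_of_eq⟩

/-- Let `𝔭, 𝔮` be primes of a graded ring `A` with `𝔮` graded, and let `T` be the multiplicative
set of homogeneous elements of `A ∖ 𝔭`. Then the graded localization `(A/𝔮)_{[𝔭]}` is nonzero
iff `𝔮 ⊆ 𝔭*`; and if `𝔭` is a minimal prime of `A`, it is nonzero iff `𝔮 = 𝔭`. -/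
theorem stmt_9 {A : Type*} [CommRing A] (𝒜 : ℤ → AddSubgroup A) [GradedRing 𝒜]
    (𝔭 𝔮 : Ideal A) [𝔭.IsPrime] [𝔮.IsPrime] (h𝔮 : Ideal.IsHomogeneous 𝒜 𝔮)
    (T : Submonoid A) (hT : (T : Set A) = {a : A | SetLike.IsHomogeneousElem 𝒜 a ∧ a ∉ 𝔭}) :
    (Nontrivial (LocalizedModule T (A ⧸ 𝔮)) ↔ 𝔮 ≤ (Ideal.homogeneousCore 𝒜 𝔭).toIdeal) ∧
      (𝔭 ∈ minimalPrimes A →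
        (Nontrivial (LocalizedModule T (A ⧸ 𝔮)) ↔ 𝔮 = 𝔭)) :=
  stmt_9_general 𝒜 𝔭 𝔮 h𝔮 T hT
end

section
/- Let A be a Noetherian ℤ-graded commutative ring. Then *dim(A) ≤ dim(A) ≤ *dim(A) + 1, where dim is Krull dimension and *dim is the supremum of lengths of chains of graded prime ideals. -/
/-!
For a prime `p` of a `ℤ`-graded ring let `p*` be the largest homogeneous ideal inside `p`; it is
prime. Two facts drive the proof.

No prime lies strictly between `p*` and `p`. Work modulo `p*` and measure an element by its
width, the distance between the highest and the lowest degree of its components outside `p*`;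
the width is additive on products and positive on `p \ p*`, which contains no homogeneous
element. Let `u ∈ p \ p*` have least width. Dividing by `u` after multiplying by a power of
its leading component (which lies outside `p`) leaves a remainder in `p*`. If `p* < q < p`,
then either `u ∈ q`, which forces `p ≤ q`, or dividing an element of `q \ p*` by `u` produces
one of smaller width.

In a Noetherian ring, if homogeneous primes `c < p` have a prime strictly between them, they
have a homogeneous one: a minimal prime over `c + (a)`, with `a ∈ p \ c` homogeneous, is
homogeneous, and it is not `p` by Krull's principal ideal theorem in `A ⧸ c`.

By well-founded induction, the first fact gives `ht p ≤ ht p* + 1`, and the second that the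
height of a homogeneous prime is at most its height among homogeneous primes.
-/

open DirectSum

theorem PrimeSpectrum.wellFoundedLT_of_isNoetherianRing (R : Type*) [CommRing R]
    [IsNoetherianRing R] : WellFoundedLT (PrimeSpectrum R) :=
  ⟨Subrelation.wf (fun {p _} hpq ↦ Order.height_strictMono hpq
      (p.height_eq_orderHeight ▸ Ideal.height_lt_top_of_isPrime))
    (InvImage.wf Order.height wellFounded_lt)⟩

namespace Ideal

/-- Krull's principal ideal theorem, applied in `R ⧸ c`. -/
theorem not_lt_of_mem_minimalPrimes_sup_span_singleton {R : Type*} [CommRing R]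
    [IsNoetherianRing R] {c t p : Ideal R} [c.IsPrime] [t.IsPrime] {a : R}
    (hp : p ∈ (c ⊔ span {a}).minimalPrimes) (hct : c < t) : ¬t < p := by
  intro htp
  have : p.IsPrime := hp.1.1
  let f := Ideal.Quotient.mk c
  have hker : RingHom.ker f = c := mk_ker
  have ht' : (t.map f).IsPrime :=
    map_isPrime_of_surjective Ideal.Quotient.mk_surjective (hker.le.trans hct.le)
  have htp' : t.map f < p.map f := by
    refine (map_mono htp.le).lt_of_not_ge fun hpt ↦ htp.not_ge ?_
    rw [← comap_map_mk hct.le, ← comap_map_mk (hct.trans htp).le]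
    exact comap_mono hpt
  have : (p.map f).IsPrime := map_isPrime_of_surjective Ideal.Quotient.mk_surjective
    (hker.le.trans (hct.trans htp).le)
  have hheight := (height_le_iff (n := 1)).1
    (by exact_mod_cast map_height_le_one_of_mem_minimalPrimes hp) _ ht' htp'
  rw [Nat.cast_one, Order.lt_one_iff, height_eq_zero_iff_eq_bot,
    map_eq_bot_iff_le_ker, hker] at hheight
  exact hct.not_ge hheight

theorem IsHomogeneous.isHomogeneous_of_mem_minimalPrimes {ι σ A : Type*} [CommRing A]
    [AddCommMonoid ι] [LinearOrder ι] [IsOrderedCancelAddMonoid ι] [SetLike σ A]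
    [AddSubmonoidClass σ A] {𝒜 : ι → σ} [GradedRing 𝒜] {I s : Ideal A}
    (hI : I.IsHomogeneous 𝒜) (hs : s ∈ I.minimalPrimes) : s.IsHomogeneous 𝒜 := by
  have hIs : I ≤ (s.homogeneousCore 𝒜).toIdeal := by
    rw [← hI.toIdeal_homogeneousCore_eq_self]
    exact homogeneousCore_mono 𝒜 hs.1.2
  have hcore : s ≤ (s.homogeneousCore 𝒜).toIdeal :=
    hs.2 ⟨hs.1.1.homogeneousCore, hIs⟩ (toIdeal_homogeneousCore_le 𝒜 s)
  rw [IsHomogeneous.iff_eq]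
  exact (toIdeal_homogeneousCore_le 𝒜 s).antisymm hcore

section Decompose

variable {σ A : Type*} [CommRing A] [SetLike σ A] [AddSubgroupClass σ A]
  {𝒜 : ℤ → σ} [GradedRing 𝒜] {x : A}

variable (𝒜) in
theorem mem_of_forall_coe_decompose_mem (r : Ideal A) (h : ∀ i, (decompose 𝒜 x i : A) ∈ r) :
    x ∈ r := by
  classical
  rw [← sum_support_decompose 𝒜 x]
  exact sum_mem _ fun i _ ↦ h i

theorem coe_decompose_sub_coe_decompose_self (d : ℤ) :
    (decompose 𝒜 (x - decompose 𝒜 x d) d : A) = 0 := by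
  rw [decompose_sub, DFinsupp.sub_apply, AddSubgroupClass.coe_sub,
    decompose_of_mem_same 𝒜 (SetLike.coe_mem _), sub_self]

theorem coe_decompose_sub_coe_decompose_of_ne {i d : ℤ} (h : i ≠ d) :
    (decompose 𝒜 (x - decompose 𝒜 x d) i : A) = decompose 𝒜 x i := by
  rw [decompose_sub, DFinsupp.sub_apply, AddSubgroupClass.coe_sub,
    decompose_of_mem_ne 𝒜 (SetLike.coe_mem _) (Ne.symm h), sub_zero]

theorem coe_decompose_mul_of_left_mem_sub {c : A} {d : ℤ} (hc : c ∈ 𝒜 d) (n : ℤ) :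
    (decompose 𝒜 (c * x) n : A) = c * decompose 𝒜 x (n - d) := by
  conv_lhs => rw [← add_sub_cancel d n]
  exact coe_decompose_mul_add_of_left_mem 𝒜 hc

end Decompose

section DegreesModulo

variable {σ A : Type*} [CommRing A] [SetLike σ A] [AddSubgroupClass σ A]
  (𝒜 : ℤ → σ) [GradedRing 𝒜] (r : Ideal A) {x y : A}

/- Degrees are read modulo `r`: `supportMod 𝒜 r x` is the set of degrees of the components of
`x` outside `r`. `topDegMod` and `botDegMod` are its extreme elements, with the junk value `0`
when it is empty, that is, when every component of `x` lies in `r`. -/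
open scoped Classical in
noncomputable def supportMod (x : A) : Finset ℤ :=
  {i ∈ (decompose 𝒜 x).support | (decompose 𝒜 x i : A) ∉ r}

noncomputable def topDegMod (x : A) : ℤ := (supportMod 𝒜 r x).max.unbotD 0

noncomputable def botDegMod (x : A) : ℤ := (supportMod 𝒜 r x).min.untopD 0

noncomputable def widthMod (x : A) : ℕ := (topDegMod 𝒜 r x - botDegMod 𝒜 r x).toNat

variable {𝒜 r}

theorem mem_supportMod {i : ℤ} : i ∈ supportMod 𝒜 r x ↔ (decompose 𝒜 x i : A) ∉ r := by
  classical
  simp only [supportMod, Finset.mem_filter, DFinsupp.mem_support_iff, and_iff_right_iff_imp]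
  intro hi h0
  rw [h0, ZeroMemClass.coe_zero] at hi
  exact hi r.zero_mem

variable (𝒜) in
theorem supportMod_nonempty (hx : x ∉ r) : (supportMod 𝒜 r x).Nonempty := by
  by_contra h
  refine hx (mem_of_forall_coe_decompose_mem 𝒜 r fun i ↦ ?_)
  by_contra hi
  exact h ⟨i, mem_supportMod.2 hi⟩

theorem topDegMod_mem_supportMod (h : (supportMod 𝒜 r x).Nonempty) :
    topDegMod 𝒜 r x ∈ supportMod 𝒜 r x := by
  obtain ⟨e, he⟩ := Finset.max_of_nonempty h
  rw [topDegMod, he, WithBot.unbotD_coe]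
  exact Finset.mem_of_max he

theorem le_topDegMod {i : ℤ} (hi : i ∈ supportMod 𝒜 r x) : i ≤ topDegMod 𝒜 r x := by
  obtain ⟨e, he⟩ := Finset.max_of_mem hi
  rw [topDegMod, he, WithBot.unbotD_coe]
  exact Finset.le_max_of_eq hi he

theorem botDegMod_mem_supportMod (h : (supportMod 𝒜 r x).Nonempty) :
    botDegMod 𝒜 r x ∈ supportMod 𝒜 r x := by
  obtain ⟨e, he⟩ := Finset.min_of_nonempty h
  rw [botDegMod, he, WithTop.untopD_coe]
  exact Finset.mem_of_min he

theorem botDegMod_le {i : ℤ} (hi : i ∈ supportMod 𝒜 r x) : botDegMod 𝒜 r x ≤ i := by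
  obtain ⟨e, he⟩ := Finset.min_of_mem hi
  rw [botDegMod, he, WithTop.untopD_coe]
  exact Finset.min_le_of_eq hi he

theorem topDegMod_eq {e : ℤ} (he : e ∈ supportMod 𝒜 r x)
    (hle : ∀ i ∈ supportMod 𝒜 r x, i ≤ e) : topDegMod 𝒜 r x = e :=
  le_antisymm (hle _ (topDegMod_mem_supportMod ⟨e, he⟩)) (le_topDegMod he)

theorem botDegMod_eq {e : ℤ} (he : e ∈ supportMod 𝒜 r x)
    (hle : ∀ i ∈ supportMod 𝒜 r x, e ≤ i) : botDegMod 𝒜 r x = e :=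
  le_antisymm (botDegMod_le he) (hle _ (botDegMod_mem_supportMod ⟨e, he⟩))

theorem botDegMod_le_topDegMod (hx : x ∉ r) : botDegMod 𝒜 r x ≤ topDegMod 𝒜 r x :=
  botDegMod_le (topDegMod_mem_supportMod (supportMod_nonempty 𝒜 hx))

theorem widthMod_eq (hx : x ∉ r) :
    (widthMod 𝒜 r x : ℤ) = topDegMod 𝒜 r x - botDegMod 𝒜 r x := by
  rw [widthMod, Int.toNat_of_nonneg (sub_nonneg.2 (botDegMod_le_topDegMod hx))]

theorem coe_decompose_mul_mem {n : ℤ}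
    (h : ∀ i ∈ supportMod 𝒜 r x, ∀ j ∈ supportMod 𝒜 r y, i + j ≠ n) :
    (decompose 𝒜 (x * y) n : A) ∈ r := by
  classical
  rw [decompose_mul, coe_mul_apply]
  refine sum_mem _ fun ij hij ↦ ?_
  by_cases hi : ij.1 ∈ supportMod 𝒜 r x
  · by_cases hj : ij.2 ∈ supportMod 𝒜 r y
    · exact absurd (Finset.mem_filter.1 hij).2 (h _ hi _ hj)
    · exact mul_mem_left _ _ (not_not.1 (mt mem_supportMod.2 hj))
  · exact mul_mem_right _ _ (not_not.1 (mt mem_supportMod.2 hi))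

theorem coe_decompose_mul_sub_mem {i j : ℤ}
    (h : ∀ i' ∈ supportMod 𝒜 r x, ∀ j' ∈ supportMod 𝒜 r y, i' + j' = i + j → i' = i) :
    (decompose 𝒜 (x * y) (i + j) : A) - decompose 𝒜 x i * decompose 𝒜 y j ∈ r := by
  have key : (decompose 𝒜 (x * y) (i + j) : A) - decompose 𝒜 x i * decompose 𝒜 y j =
      decompose 𝒜 ((x - decompose 𝒜 x i) * y) (i + j) := by
    rw [sub_mul, decompose_sub, DFinsupp.sub_apply, AddSubgroupClass.coe_sub,
      coe_decompose_mul_add_of_left_mem 𝒜 (SetLike.coe_mem _)]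
  rw [key]
  refine coe_decompose_mul_mem fun i' hi' j' hj' hij ↦ ?_
  rw [mem_supportMod] at hi'
  by_cases hii : i' = i
  · subst hii
    exact hi' (by rw [coe_decompose_sub_coe_decompose_self]; exact r.zero_mem)
  · rw [coe_decompose_sub_coe_decompose_of_ne hii] at hi'
    exact hii (h i' (mem_supportMod.2 hi') j' hj' hij)

theorem add_mem_supportMod_mul (hr : r.IsPrime) {i j : ℤ} (hi : i ∈ supportMod 𝒜 r x)
    (hj : j ∈ supportMod 𝒜 r y)
    (h : ∀ i' ∈ supportMod 𝒜 r x, ∀ j' ∈ supportMod 𝒜 r y, i' + j' = i + j → i' = i) :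
    i + j ∈ supportMod 𝒜 r (x * y) := by
  rw [mem_supportMod] at hi hj ⊢
  intro hij
  have := r.sub_mem hij (coe_decompose_mul_sub_mem h)
  rw [sub_sub_cancel] at this
  exact (hr.mem_or_mem this).elim hi hj

theorem topDegMod_mul (hr : r.IsPrime) (hx : x ∉ r) (hy : y ∉ r) :
    topDegMod 𝒜 r (x * y) = topDegMod 𝒜 r x + topDegMod 𝒜 r y := by
  have ha := topDegMod_mem_supportMod (supportMod_nonempty 𝒜 hx)
  have hb := topDegMod_mem_supportMod (supportMod_nonempty 𝒜 hy)
  refine topDegMod_eq (add_mem_supportMod_mul hr ha hb fun i' hi' j' hj' _ ↦ ?_) fun n hn ↦ ?_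
  · have := le_topDegMod hi'
    have := le_topDegMod hj'
    omega
  · by_contra hlt
    refine (mem_supportMod.1 hn) (coe_decompose_mul_mem fun i' hi' j' hj' ↦ ?_)
    have := le_topDegMod hi'
    have := le_topDegMod hj'
    omega

theorem botDegMod_mul (hr : r.IsPrime) (hx : x ∉ r) (hy : y ∉ r) :
    botDegMod 𝒜 r (x * y) = botDegMod 𝒜 r x + botDegMod 𝒜 r y := by
  have ha := botDegMod_mem_supportMod (supportMod_nonempty 𝒜 hx)
  have hb := botDegMod_mem_supportMod (supportMod_nonempty 𝒜 hy)
  refine botDegMod_eq (add_mem_supportMod_mul hr ha hb fun i' hi' j' hj' _ ↦ ?_) fun n hn ↦ ?_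
  · have := botDegMod_le hi'
    have := botDegMod_le hj'
    omega
  · by_contra hlt
    refine (mem_supportMod.1 hn) (coe_decompose_mul_mem fun i' hi' j' hj' ↦ ?_)
    have := botDegMod_le hi'
    have := botDegMod_le hj'
    omega

theorem widthMod_mul (hr : r.IsPrime) (hx : x ∉ r) (hy : y ∉ r) :
    widthMod 𝒜 r (x * y) = widthMod 𝒜 r x + widthMod 𝒜 r y := by
  have hxy := widthMod_eq (𝒜 := 𝒜) (hr.mul_notMem hx hy)
  rw [topDegMod_mul hr hx hy, botDegMod_mul hr hx hy] at hxy
  have := widthMod_eq (𝒜 := 𝒜) hx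
  have := widthMod_eq (𝒜 := 𝒜) hy
  omega

theorem supportMod_of_mem {c : A} {d : ℤ} (hc : c ∈ 𝒜 d) (hcr : c ∉ r) :
    supportMod 𝒜 r c = {d} := by
  ext i
  rw [mem_supportMod, Finset.mem_singleton]
  by_cases hi : i = d
  · subst hi
    simp [decompose_of_mem_same 𝒜 hc, hcr]
  · simp [decompose_of_mem_ne 𝒜 hc (Ne.symm hi), hi]

theorem widthMod_of_mem {c : A} {d : ℤ} (hc : c ∈ 𝒜 d) (hcr : c ∉ r) : widthMod 𝒜 r c = 0 := by
  simp [widthMod, topDegMod, botDegMod, supportMod_of_mem hc hcr]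

theorem supportMod_add_of_mem (hh : r.IsHomogeneous 𝒜) {ρ : A} (hρ : ρ ∈ r) :
    supportMod 𝒜 r (x + ρ) = supportMod 𝒜 r x := by
  ext i
  rw [mem_supportMod, mem_supportMod, decompose_add, DFinsupp.add_apply,
    AddMemClass.coe_add, r.add_mem_iff_left (hh i hρ)]

theorem widthMod_add_of_mem (hh : r.IsHomogeneous 𝒜) {ρ : A} (hρ : ρ ∈ r) :
    widthMod 𝒜 r (x + ρ) = widthMod 𝒜 r x := by
  simp only [widthMod, topDegMod, botDegMod, supportMod_add_of_mem hh hρ]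

variable (𝒜 r) in
noncomputable def leadMod (x : A) : A := decompose 𝒜 x (topDegMod 𝒜 r x)

theorem leadMod_mem (x : A) : leadMod 𝒜 r x ∈ 𝒜 (topDegMod 𝒜 r x) := SetLike.coe_mem _

theorem leadMod_notMem (hx : x ∉ r) : leadMod 𝒜 r x ∉ r :=
  mem_supportMod.1 (topDegMod_mem_supportMod (supportMod_nonempty 𝒜 hx))

theorem widthMod_leadMod_mul_sub_lt {u w : A} (hu : u ∉ r) (hw : w ∉ r)
    (huw : widthMod 𝒜 r u ≤ widthMod 𝒜 r w)
    (hw' : leadMod 𝒜 r u * w - leadMod 𝒜 r w * u ∉ r) :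
    widthMod 𝒜 r (leadMod 𝒜 r u * w - leadMod 𝒜 r w * u) < widthMod 𝒜 r w := by
  set e := topDegMod 𝒜 r u
  set f := topDegMod 𝒜 r w
  set w' := leadMod 𝒜 r u * w - leadMod 𝒜 r w * u
  have hbound : ∀ i ∈ supportMod 𝒜 r w',
      i < e + f ∧ (e + botDegMod 𝒜 r w ≤ i ∨ f + botDegMod 𝒜 r u ≤ i) := by
    intro i hi
    rw [mem_supportMod, decompose_sub, DFinsupp.sub_apply, AddSubgroupClass.coe_sub,
      coe_decompose_mul_of_left_mem_sub (leadMod_mem u),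
      coe_decompose_mul_of_left_mem_sub (leadMod_mem w)] at hi
    have hne : i ≠ e + f := by
      rintro rfl
      rw [add_sub_cancel_left, add_sub_cancel_right] at hi
      exact hi (by rw [leadMod, leadMod, mul_comm, sub_self]; exact r.zero_mem)
    by_cases hwi : (decompose 𝒜 w (i - e) : A) ∈ r
    · have hui : i - f ∈ supportMod 𝒜 r u :=
        mem_supportMod.2 fun hui ↦ hi (r.sub_mem (r.mul_mem_left _ hwi) (r.mul_mem_left _ hui))
      have := le_topDegMod hui
      have := botDegMod_le hui
      omega
    · have hwi := mem_supportMod.2 hwi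
      have := le_topDegMod hwi
      have := botDegMod_le hwi
      omega
  have htop := hbound _ (topDegMod_mem_supportMod (supportMod_nonempty 𝒜 hw'))
  have hbot := hbound _ (botDegMod_mem_supportMod (supportMod_nonempty 𝒜 hw'))
  have := widthMod_eq (𝒜 := 𝒜) hu
  have := widthMod_eq (𝒜 := 𝒜) hw
  have := widthMod_eq (𝒜 := 𝒜) hw'
  omega

variable (𝒜) in
theorem exists_pow_leadMod_mul_eq {u : A} (hu : u ∉ r) (w : A) :
    ∃ (N : ℕ) (v ρ : A), leadMod 𝒜 r u ^ N * w = v * u + ρ ∧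
      (ρ ∈ r ∨ widthMod 𝒜 r ρ < widthMod 𝒜 r u) := by
  induction hn : widthMod 𝒜 r w using Nat.strong_induction_on generalizing w with
  | _ n ih =>
  by_cases hw : w ∈ r ∨ widthMod 𝒜 r w < widthMod 𝒜 r u
  · exact ⟨0, 0, w, by ring, hw⟩
  rw [not_or, not_lt] at hw
  set w' := leadMod 𝒜 r u * w - leadMod 𝒜 r w * u
  have hww' : leadMod 𝒜 r u * w = leadMod 𝒜 r w * u + w' := by ring
  by_cases hw' : w' ∈ r
  · exact ⟨1, leadMod 𝒜 r w, w', by rw [pow_one, hww'], Or.inl hw'⟩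
  obtain ⟨N, v, ρ, hN, hρ⟩ :=
    ih _ (hn ▸ widthMod_leadMod_mul_sub_lt hu hw.1 hw.2 hw') w' rfl
  refine ⟨N + 1, v + leadMod 𝒜 r u ^ N * leadMod 𝒜 r w, ρ, ?_, hρ⟩
  rw [pow_succ, mul_assoc, hww', mul_add, hN]
  ring

variable (𝒜) in
theorem exists_pow_leadMod_mul_eq_add_mem {p : Ideal A} {u : A} (hup : u ∈ p) (hur : u ∉ r)
    (humin : ∀ w ∈ p, w ∉ r → widthMod 𝒜 r u ≤ widthMod 𝒜 r w) :
    ∀ w ∈ p, ∃ (N : ℕ) (v ρ : A), leadMod 𝒜 r u ^ N * w = v * u + ρ ∧ ρ ∈ r := by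
  intro w hw
  obtain ⟨N, v, ρ, h, hρ⟩ := exists_pow_leadMod_mul_eq 𝒜 hur w
  refine ⟨N, v, ρ, h, by_contra fun hρr ↦ (humin ρ ?_ hρr).not_gt (hρ.resolve_left hρr)⟩
  rw [eq_sub_of_add_eq' h.symm]
  exact p.sub_mem (p.mul_mem_left _ hw) (p.mul_mem_left _ hup)

end DegreesModulo

section HomogeneousCore

variable {σ A : Type*} [CommRing A] [SetLike σ A] [AddSubgroupClass σ A]
  {𝒜 : ℤ → σ} [GradedRing 𝒜] {p : Ideal A} {x : A}

theorem widthMod_homogeneousCore_ne_zero (hx : x ∈ p)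
    (hxr : x ∉ (p.homogeneousCore 𝒜).toIdeal) :
    widthMod 𝒜 (p.homogeneousCore 𝒜).toIdeal x ≠ 0 := by
  set r := (p.homogeneousCore 𝒜).toIdeal
  set d := topDegMod 𝒜 r x
  intro h0
  have hd := topDegMod_mem_supportMod (supportMod_nonempty 𝒜 hxr)
  have hwidth := widthMod_eq (𝒜 := 𝒜) hxr
  have hsub : x - decompose 𝒜 x d ∈ r := by
    refine mem_of_forall_coe_decompose_mem 𝒜 r fun i ↦ ?_
    by_cases hi : i = d
    · rw [hi, coe_decompose_sub_coe_decompose_self]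
      exact r.zero_mem
    · rw [coe_decompose_sub_coe_decompose_of_ne hi]
      by_contra hxi
      have := le_topDegMod (mem_supportMod.2 hxi)
      have := botDegMod_le (mem_supportMod.2 hxi)
      omega
  have hxd : (decompose 𝒜 x d : A) ∈ p := by
    simpa using p.sub_mem hx (toIdeal_homogeneousCore_le 𝒜 p hsub)
  exact mem_supportMod.1 hd
    (mem_homogeneousCore_of_homogeneous_of_mem ⟨d, SetLike.coe_mem _⟩ hxd)

theorem IsPrime.not_lt_of_homogeneousCore_lt {q : Ideal A} (hp : p.IsPrime) (hq : q.IsPrime)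
    (hpq : (p.homogeneousCore 𝒜).toIdeal < q) : ¬q < p := by
  set r := (p.homogeneousCore 𝒜).toIdeal
  have hr : r.IsPrime := hp.homogeneousCore
  have hh : r.IsHomogeneous 𝒜 := (p.homogeneousCore 𝒜).isHomogeneous
  intro hqp
  obtain ⟨x₀, hx₀q, hx₀r⟩ := SetLike.exists_of_lt hpq
  obtain ⟨u, ⟨hup, hur⟩, humin⟩ := (measure (widthMod 𝒜 r)).wf.has_min {w | w ∈ p ∧ w ∉ r}
    ⟨x₀, hqp.le hx₀q, hx₀r⟩
  obtain ⟨x, ⟨hxq, hxr⟩, hxmin⟩ := (measure (widthMod 𝒜 r)).wf.has_min {w | w ∈ q ∧ w ∉ r}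
    ⟨x₀, hx₀q, hx₀r⟩
  set ℓ := leadMod 𝒜 r u
  have hℓr : ℓ ∉ r := leadMod_notMem hur
  have hℓq : ℓ ∉ q := fun h ↦
    hℓr (mem_homogeneousCore_of_homogeneous_of_mem ⟨_, leadMod_mem u⟩ (hqp.le h))
  have hdiv := exists_pow_leadMod_mul_eq_add_mem 𝒜 hup hur fun w hw hwr ↦
    not_lt.1 (humin w ⟨hw, hwr⟩)
  by_cases huq : u ∈ q
  · obtain ⟨y, hyp, hyq⟩ := SetLike.exists_of_lt hqp
    obtain ⟨N, v, ρ, h, hρ⟩ := hdiv y hyp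
    have : ℓ ^ N * y ∈ q := h ▸ q.add_mem (q.mul_mem_left _ huq) (hpq.le hρ)
    exact hyq ((hq.mem_or_mem this).resolve_left (mt (hq.mem_of_pow_mem N) hℓq))
  · obtain ⟨N, v, ρ, h, hρ⟩ := hdiv x (hqp.le hxq)
    have hvq : v ∈ q := by
      refine (hq.mem_or_mem ?_).resolve_right huq
      rw [eq_sub_of_add_eq h.symm]
      exact q.sub_mem (q.mul_mem_left _ hxq) (hpq.le hρ)
    have hℓN : ℓ ^ N ∉ r := mt (hr.mem_of_pow_mem N) hℓr
    have hvr : v ∉ r := fun hv ↦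
      hr.mul_notMem hℓN hxr (h ▸ r.add_mem (r.mul_mem_right _ hv) hρ)
    have hwidth : widthMod 𝒜 r x = widthMod 𝒜 r v + widthMod 𝒜 r u := calc
      widthMod 𝒜 r x = widthMod 𝒜 r (ℓ ^ N * x) := by
        rw [widthMod_mul hr hℓN hxr,
          widthMod_of_mem (SetLike.pow_mem_graded N (leadMod_mem u)) hℓN, zero_add]
      _ = widthMod 𝒜 r (v * u) := by rw [h, widthMod_add_of_mem hh hρ]
      _ = _ := widthMod_mul hr hvr hur
    have : widthMod 𝒜 r u ≠ 0 := widthMod_homogeneousCore_ne_zero hup hur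
    exact hxmin v ⟨hvq, hvr⟩ (show widthMod 𝒜 r v < widthMod 𝒜 r x by omega)

end HomogeneousCore

variable {σ A : Type*} [CommRing A] [IsNoetherianRing A] [SetLike σ A] [AddSubgroupClass σ A]
  {𝒜 : ℤ → σ} [GradedRing 𝒜] in
theorem exists_isHomogeneous_isPrime_between {c t p : Ideal A} [c.IsPrime] [t.IsPrime]
    [p.IsPrime]
    (hc : c.IsHomogeneous 𝒜) (hp : p.IsHomogeneous 𝒜) (hct : c < t) (htp : t < p) :
    ∃ s : Ideal A, s.IsPrime ∧ s.IsHomogeneous 𝒜 ∧ c < s ∧ s < p := by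
  obtain ⟨z, hzp, hzc⟩ := SetLike.exists_of_lt (hct.trans htp)
  obtain ⟨i, hi⟩ := not_forall.1 (mt (mem_of_forall_coe_decompose_mem 𝒜 c) hzc)
  set a : A := (decompose 𝒜 z i : A)
  have hI : (c ⊔ span {a}).IsHomogeneous 𝒜 :=
    hc.sup (homogeneous_span 𝒜 _ fun _ hx ↦ hx ▸ ⟨i, SetLike.coe_mem _⟩)
  obtain ⟨s, hs, hsp⟩ := exists_minimalPrimes_le (J := p)
    (sup_le (hct.trans htp).le (span_le.2 (Set.singleton_subset_iff.2 (hp i hzp))))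
  refine ⟨s, hs.1.1, hI.isHomogeneous_of_mem_minimalPrimes hs,
    (le_sup_left.trans hs.1.2).lt_of_ne ?_, hsp.lt_of_ne ?_⟩
  · rintro rfl
    exact hi (hs.1.2 (mem_sup_right (mem_span_singleton_self a)))
  · rintro rfl
    exact not_lt_of_mem_minimalPrimes_sup_span_singleton hs hct htp

end Ideal

namespace PrimeSpectrum

variable {σ A : Type*} [CommRing A] [IsNoetherianRing A] [SetLike σ A] [AddSubgroupClass σ A]
  (𝒜 : ℤ → σ) [GradedRing 𝒜]

open Order

def homogeneousCore (p : PrimeSpectrum A) : {q : PrimeSpectrum A // q.asIdeal.IsHomogeneous 𝒜} :=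
  ⟨⟨(p.asIdeal.homogeneousCore 𝒜).toIdeal, p.isPrime.homogeneousCore⟩,
    (p.asIdeal.homogeneousCore 𝒜).isHomogeneous⟩

theorem height_le_height_homogeneousCore_add_one (p : PrimeSpectrum A) :
    height p ≤ height (p.homogeneousCore 𝒜).1 + 1 := by
  have := wellFoundedLT_of_isNoetherianRing A
  induction p using WellFoundedLT.induction with
  | _ p ih =>
  rw [height_eq_iSup_lt_height p]
  refine iSup₂_le fun q hqp ↦ add_le_add_left ?_ 1
  by_cases hq : q.asIdeal ≤ (p.asIdeal.homogeneousCore 𝒜).toIdeal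
  · exact height_mono hq
  have hcore : (q.homogeneousCore 𝒜).1 < (p.homogeneousCore 𝒜).1 := by
    refine (Ideal.homogeneousCore_mono 𝒜 hqp.le).lt_of_ne fun h ↦ ?_
    refine p.isPrime.not_lt_of_homogeneousCore_lt (𝒜 := 𝒜) q.isPrime ?_ hqp
    exact (h ▸ Ideal.toIdeal_homogeneousCore_le 𝒜 q.asIdeal).lt_of_ne (fun h' ↦ hq h'.ge)
  exact (ih q hqp).trans (height_add_one_le hcore)

theorem height_le_height_of_isHomogeneous (p : PrimeSpectrum A) (hp : p.asIdeal.IsHomogeneous 𝒜) :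
    height p ≤ height (⟨p, hp⟩ : {q : PrimeSpectrum A // q.asIdeal.IsHomogeneous 𝒜}) := by
  have := wellFoundedLT_of_isNoetherianRing A
  induction p using WellFoundedLT.induction with
  | _ p ih =>
  rw [height_eq_iSup_lt_height p]
  refine iSup₂_le fun q hqp ↦ ?_
  let p' : {q : PrimeSpectrum A // q.asIdeal.IsHomogeneous 𝒜} := ⟨p, hp⟩
  by_cases hq : q.asIdeal.IsHomogeneous 𝒜
  · exact (add_le_add_left (ih q hqp hq) 1).trans (height_add_one_le (show ⟨q, hq⟩ < p' from hqp))
  set c := q.homogeneousCore 𝒜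
  have hcq : c.1 < q := (Ideal.toIdeal_homogeneousCore_le 𝒜 q.asIdeal).lt_of_ne
    fun h ↦ hq ((Ideal.IsHomogeneous.iff_eq 𝒜 _).2 h)
  obtain ⟨s, hs, hsh, hcs, hsp⟩ :=
    Ideal.exists_isHomogeneous_isPrime_between c.2 hp hcq hqp
  let s' : {q : PrimeSpectrum A // q.asIdeal.IsHomogeneous 𝒜} := ⟨⟨s, hs⟩, hsh⟩
  calc height q + 1 ≤ height c.1 + 1 + 1 := by
        gcongr; exact height_le_height_homogeneousCore_add_one 𝒜 q
    _ ≤ height c + 1 + 1 := by gcongr; exact ih c.1 (hcq.trans hqp) c.2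
    _ ≤ height s' + 1 := by gcongr; exact height_add_one_le (show c < s' from hcs)
    _ ≤ height p' := height_add_one_le (show s' < p' from hsp)

end PrimeSpectrum

/-- For a Noetherian ℤ-graded commutative ring `A`,
`*dim(A) ≤ dim(A) ≤ *dim(A) + 1`, where `dim` is the Krull dimension and `*dim` is the
supremum of lengths of chains of graded primes. -/
theorem stmt_14 {A : Type*} [CommRing A] [IsNoetherianRing A]
    (𝒜 : ℤ → AddSubgroup A) [GradedRing 𝒜] :
    Order.krullDim {q : PrimeSpectrum A // Ideal.IsHomogeneous 𝒜 q.asIdeal} ≤ ringKrullDim A ∧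
      ringKrullDim A ≤
        Order.krullDim {q : PrimeSpectrum A // Ideal.IsHomogeneous 𝒜 q.asIdeal} + (1 : WithBot ℕ∞) := by
  refine ⟨Order.krullDim_le_of_strictMono Subtype.val fun _ _ h ↦ h, ?_⟩
  rw [ringKrullDim, Order.krullDim_eq_iSup_height]
  refine iSup_le fun p ↦ ?_
  set c := p.homogeneousCore 𝒜
  have hp : Order.height p ≤ Order.height c + 1 :=
    (p.height_le_height_homogeneousCore_add_one 𝒜).trans
      (add_le_add_left (c.1.height_le_height_of_isHomogeneous 𝒜 c.2) 1)
  calc (Order.height p : WithBot ℕ∞) ≤ Order.height c + 1 := by exact_mod_cast hp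
    _ ≤ _ := by gcongr; exact Order.height_le_krullDim c
end

section
/- Let S be a positively graded commutative ring and T a multiplicatively closed set of homogeneous elements of S containing at least one element of positive degree (and not containing 0). Then the map 𝔭 ↦ (T⁻¹𝔭)₀ gives a one-to-one inclusion-preserving correspondence between the graded primes 𝔭 of S with 𝔭 ∩ T = ∅ and S₊ ⊄ 𝔭, and the prime ideals of the degree-zero ring (T⁻¹S)₀. -/
/-!
Homogeneous primes of `A` disjoint from `T` correspond to homogeneous primes of `T⁻¹A`, by the usual
localization correspondence (extension and contraction preserve homogeneity). Since `T` contains a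
homogeneous `t` of positive degree `d`, the ring `T⁻¹A` has the homogeneous unit `u = t / 1`, and a
homogeneous `x` of degree `n` lies in a radical ideal exactly when the degree-zero element
`x ^ d * u ^ (-n)` does. So a homogeneous prime is determined by its degree-zero part, and every prime
`q` of the degree-zero part arises this way, from the radical of the extension `q · T⁻¹A`.
-/

open DirectSum

theorem Ideal.IsRadical.pow_mul_unit_mem_iff {R : Type*} [CommSemiring R] {I : Ideal R}
    (hI : I.IsRadical) {d : ℕ} (hd : 0 < d) (u : Rˣ) (x : R) : x ^ d * u ∈ I ↔ x ∈ I := by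
  rw [I.mul_unit_mem_iff_mem u.isUnit]
  exact ⟨fun h => hI ⟨d, h⟩, fun h => I.pow_mem_of_mem h d hd⟩

namespace GradedRing

section DegreeZero

variable {ι R σ : Type*} [DecidableEq ι] [AddCommMonoid ι] [CommRing R] [SetLike σ R]
  [AddSubgroupClass σ R] (𝒜 : ι → σ) [GradedRing 𝒜]

theorem comap_map_algebraMap_zero (q : Ideal (𝒜 0)) :
    (q.map (algebraMap (𝒜 0) R)).comap (algebraMap (𝒜 0) R) = q := by
  refine le_antisymm (fun x hx => ?_) Ideal.le_comap_map
  have hx' : (x : R) ∈ q • (⊤ : Submodule (𝒜 0) R) := by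
    rw [Ideal.smul_top_eq_map]
    exact hx
  suffices ∀ y ∈ q • (⊤ : Submodule (𝒜 0) R), decompose 𝒜 y 0 ∈ q by
    simpa using this _ hx'
  intro y hy
  refine Submodule.smul_induction_on hy (fun a ha r _ => ?_) (fun y z hy hz => ?_)
  · have : decompose 𝒜 (a • r) 0 = a * decompose 𝒜 r 0 :=
      Subtype.ext (coe_decompose_mul_of_left_mem_zero 𝒜 a.2)
    rw [this]
    exact q.mul_mem_right _ ha
  · rw [decompose_add, DirectSum.add_apply]
    exact q.add_mem hy hz

theorem isHomogeneous_map_algebraMap_zero (q : Ideal (𝒜 0)) :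
    (q.map (algebraMap (𝒜 0) R)).IsHomogeneous 𝒜 :=
  Ideal.homogeneous_span 𝒜 _ fun _ ⟨x, _, hx⟩ => ⟨0, hx ▸ x.2⟩

theorem comap_radical_map_algebraMap_zero {q : Ideal (𝒜 0)} (hq : q.IsRadical) :
    (q.map (algebraMap (𝒜 0) R)).radical.comap (algebraMap (𝒜 0) R) = q := by
  rw [Ideal.comap_radical, comap_map_algebraMap_zero, hq.radical]

end DegreeZero

section UnitOfPositiveDegree

variable {R σ : Type*} [CommRing R] [SetLike σ R] [AddSubgroupClass σ R] {𝒜 : ℤ → σ}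
  [GradedRing 𝒜] {u : Rˣ}

theorem zpow_mem_graded_of_unit {d : ℤ} (hu : (u : R) ∈ 𝒜 d) (hu' : (↑u⁻¹ : R) ∈ 𝒜 (-d))
    (n : ℤ) : (↑(u ^ n) : R) ∈ 𝒜 (n * d) := by
  obtain ⟨k, rfl | rfl⟩ := Int.eq_nat_or_neg n
  · simpa [mul_comm] using SetLike.pow_mem_graded k hu
  · simpa [mul_comm] using SetLike.pow_mem_graded k hu'

variable {d : ℕ} (hd : 0 < d) (hu : (u : R) ∈ 𝒜 d) (hu' : (↑u⁻¹ : R) ∈ 𝒜 (-d))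
include hu hu'

theorem pow_mul_zpow_neg_mem_zero {n : ℤ} {x : R} (hx : x ∈ 𝒜 n) :
    x ^ d * ↑(u ^ (-n)) ∈ 𝒜 0 := by
  have := SetLike.mul_mem_graded (SetLike.pow_mem_graded d hx) (zpow_mem_graded_of_unit hu hu' (-n))
  rwa [show d • n + -n * d = 0 by rw [nsmul_eq_mul]; ring] at this

include hd

theorem le_of_comap_algebraMap_zero_le {P P' : Ideal R} (hP : P.IsHomogeneous 𝒜)
    (hP' : P'.IsRadical)
    (h : P.comap (algebraMap (𝒜 0) R) ≤ P'.comap (algebraMap (𝒜 0) R)) : P ≤ P' := by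
  classical
  intro r hr
  rw [← sum_support_decompose 𝒜 r]
  refine Ideal.sum_mem _ fun n _ => ?_
  rw [← hP'.pow_mul_unit_mem_iff hd (u ^ (-n))]
  exact h (x := ⟨_, pow_mul_zpow_neg_mem_zero hu hu' (decompose 𝒜 r n).2⟩)
    (P.mul_mem_right _ (P.pow_mem_of_mem (hP n hr) d hd))

theorem isPrime_radical_map_algebraMap_zero {q : Ideal (𝒜 0)} (hq : q.IsPrime) :
    (q.map (algebraMap (𝒜 0) R)).radical.IsPrime := by
  set P := (q.map (algebraMap (𝒜 0) R)).radical
  have hPq : P.comap (algebraMap (𝒜 0) R) = q :=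
    comap_radical_map_algebraMap_zero 𝒜 hq.isRadical
  have hP : P.IsRadical := Ideal.radical_isRadical _
  refine (isHomogeneous_map_algebraMap_zero 𝒜 q).radical
    |>.isPrime_of_homogeneous_mem_or_mem (fun htop => hq.ne_top ?_) ?_
  · rw [← hPq]
    exact (congrArg _ htop).trans Ideal.comap_top
  rintro x y ⟨m, hx⟩ ⟨n, hy⟩ hxy
  rw [← hP.pow_mul_unit_mem_iff hd (u ^ (-m)) x, ← hP.pow_mul_unit_mem_iff hd (u ^ (-n)) y]
  let x₀ : 𝒜 0 := ⟨_, pow_mul_zpow_neg_mem_zero hu hu' hx⟩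
  let y₀ : 𝒜 0 := ⟨_, pow_mul_zpow_neg_mem_zero hu hu' hy⟩
  have hxy₀ : x₀ * y₀ ∈ P.comap (algebraMap (𝒜 0) R) := by
    rw [Ideal.mem_comap]
    have := (hP.pow_mul_unit_mem_iff hd (u ^ (-(m + n))) (x * y)).2 hxy
    convert this using 1
    simp only [x₀, y₀, map_mul, SetLike.GradeZero.algebraMap_apply]
    rw [neg_add, zpow_add, Units.val_mul, mul_pow]
    ring
  exact (hPq ▸ hq : (P.comap (algebraMap (𝒜 0) R)).IsPrime).mem_or_mem hxy₀

noncomputable def homogeneousPrimesOrderIsoPrimesZero :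
    {P : Ideal R // P.IsPrime ∧ P.IsHomogeneous 𝒜} ≃o {q : Ideal (𝒜 0) // q.IsPrime} :=
  OrderIso.ofSurjective
    (OrderEmbedding.ofMapLEIff (fun P => ⟨P.1.comap (algebraMap (𝒜 0) R), P.2.1.comap _⟩)
      fun P P' => ⟨le_of_comap_algebraMap_zero_le hd hu hu' P.2.2 P'.2.1.isRadical,
        fun h => Ideal.comap_mono h⟩)
    fun q => ⟨⟨_, isPrime_radical_map_algebraMap_zero hd hu hu' q.2,
      (isHomogeneous_map_algebraMap_zero 𝒜 q.1).radical⟩,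
      Subtype.ext (comap_radical_map_algebraMap_zero 𝒜 q.2.isRadical)⟩

end UnitOfPositiveDegree

end GradedRing

section Localization

variable {ι A B σ τ : Type*} [DecidableEq ι] [AddMonoid ι] [CommRing A] [CommRing B]
  [Algebra A B] [SetLike σ A] [SetLike τ B] [AddSubmonoidClass σ A] [AddSubmonoidClass τ B]
  {𝒜 : ι → σ} {ℬ : ι → τ} [GradedRing 𝒜] [GradedRing ℬ] (T : Submonoid A) [IsLocalization T B]

noncomputable def IsLocalization.homogeneousPrimesOrderIso
    (hf : ∀ {i : ι} {a : A}, a ∈ 𝒜 i → algebraMap A B a ∈ ℬ i) :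
    {p : Ideal A // p.IsPrime ∧ p.IsHomogeneous 𝒜 ∧ Disjoint (T : Set A) p} ≃o
      {P : Ideal B // P.IsPrime ∧ P.IsHomogeneous ℬ} :=
  let f : 𝒜 →+*ᵍ ℬ := ⟨algebraMap A B, hf⟩
  OrderIso.ofSurjective
    (OrderEmbedding.ofMapLEIff
      (fun p => ⟨p.1.map (algebraMap A B),
        IsLocalization.isPrime_of_isPrime_disjoint T B _ p.2.1 p.2.2.2,
        (HomogeneousIdeal.map f ⟨p.1, p.2.2.1⟩).isHomogeneous⟩)
      fun p p' => ⟨fun h => by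
        rw [← Subtype.coe_le_coe, ← IsLocalization.under_map_of_isPrime_disjoint T B p.2.1 p.2.2.2,
          ← IsLocalization.under_map_of_isPrime_disjoint T B p'.2.1 p'.2.2.2]
        exact Ideal.comap_mono h, fun h => Ideal.map_mono h⟩)
    fun P => ⟨⟨P.1.under A, ((IsLocalization.isPrime_iff_isPrime_disjoint T B P.1).1 P.2.1).1,
      (HomogeneousIdeal.comap f ⟨P.1, P.2.2⟩).isHomogeneous,
      ((IsLocalization.isPrime_iff_isPrime_disjoint T B P.1).1 P.2.1).2⟩,
      Subtype.ext (IsLocalization.map_under T B P.1)⟩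

end Localization

theorem stmt_16_general {A : Type*} [CommRing A]
    (𝒜 : ℤ → AddSubgroup A) [GradedRing 𝒜]
    (T : Submonoid A) (hTpos : ∃ t ∈ T, ∃ i : ℤ, 0 < i ∧ t ∈ 𝒜 i)
    (𝒜' : ℤ → AddSubgroup (Localization T)) [GradedRing 𝒜']
    (h𝒜' : ∀ (n : ℤ) (x : Localization T), x ∈ 𝒜' n ↔
      ∃ (i j : ℤ) (a t : A) (_ : t ∈ T), a ∈ 𝒜 i ∧ t ∈ 𝒜 j ∧ n = i - j ∧
        x * algebraMap A (Localization T) t = algebraMap A (Localization T) a)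
    (ι : (𝒜' 0) →+* Localization T) (hι : ∀ x : 𝒜' 0, ι x = (x : Localization T)) :
    ∃ e : {𝔭 : Ideal A // 𝔭.IsPrime ∧ Ideal.IsHomogeneous 𝒜 𝔭 ∧
          Disjoint (T : Set A) (𝔭 : Set A) ∧ ∃ i : ℤ, 0 < i ∧ ∃ a ∈ 𝒜 i, a ∉ 𝔭} ≃
        {q : Ideal (𝒜' 0) // q.IsPrime},
      (∀ p, (e p : Ideal (𝒜' 0)) =
          Ideal.comap ι (Ideal.map (algebraMap A (Localization T)) (p : Ideal A))) ∧
      ∀ p q : {𝔭 : Ideal A // 𝔭.IsPrime ∧ Ideal.IsHomogeneous 𝒜 𝔭 ∧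
          Disjoint (T : Set A) (𝔭 : Set A) ∧ ∃ i : ℤ, 0 < i ∧ ∃ a ∈ 𝒜 i, a ∉ 𝔭},
        (p : Ideal A) ≤ (q : Ideal A) ↔ (e p : Ideal (𝒜' 0)) ≤ (e q : Ideal (𝒜' 0)) := by
  obtain ⟨t, htT, d, hd, ht⟩ := hTpos
  lift d to ℕ using hd.le
  obtain rfl : ι = algebraMap (𝒜' 0) (Localization T) := RingHom.ext hι
  have hf {i : ℤ} {a : A} (ha : a ∈ 𝒜 i) : algebraMap A (Localization T) a ∈ 𝒜' i :=
    (h𝒜' i _).2 ⟨i, 0, a, 1, T.one_mem, ha, SetLike.one_mem_graded 𝒜, (sub_zero i).symm, by simp⟩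
  let u := (IsLocalization.map_units (Localization T) ⟨t, htT⟩).unit
  have hu' : (↑u⁻¹ : Localization T) ∈ 𝒜' (-d) :=
    (h𝒜' _ _).2 ⟨0, d, 1, t, htT, SetLike.one_mem_graded 𝒜, ht, by ring, by simp [u]⟩
  let dropIrrelevant := OrderIso.setCongr
    {𝔭 : Ideal A | 𝔭.IsPrime ∧ 𝔭.IsHomogeneous 𝒜 ∧ Disjoint (T : Set A) 𝔭 ∧
      ∃ i : ℤ, 0 < i ∧ ∃ a ∈ 𝒜 i, a ∉ 𝔭}
    {𝔭 : Ideal A | 𝔭.IsPrime ∧ 𝔭.IsHomogeneous 𝒜 ∧ Disjoint (T : Set A) 𝔭}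
    (Set.ext fun 𝔭 => ⟨fun h => ⟨h.1, h.2.1, h.2.2.1⟩,
      fun h => ⟨h.1, h.2.1, h.2.2, d, hd, t, ht, Set.disjoint_left.mp h.2.2 htT⟩⟩)
  let e := dropIrrelevant.trans ((IsLocalization.homogeneousPrimesOrderIso T hf).trans
    (GradedRing.homogeneousPrimesOrderIsoPrimesZero (by exact_mod_cast hd) (hf ht) hu'))
  exact ⟨e.toEquiv, fun p => rfl, fun p q => e.le_iff_le.symm⟩

/-- Let `S` be a positively graded ring and `T` a multiplicative set of homogeneous elements
containing an element of positive degree (and not `0`). The map `𝔭 ↦ (T⁻¹𝔭)₀` is a one-to-one,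
inclusion-preserving correspondence between graded primes `𝔭` of `S` disjoint from `T` with
`S₊ ⊄ 𝔭`, and primes of the degree-zero part `(T⁻¹S)₀` of the graded localization. -/
theorem stmt_16 {A : Type*} [CommRing A]
    (𝒜 : ℤ → AddSubgroup A) [GradedRing 𝒜]
    (hpos : ∀ i : ℤ, i < 0 → ∀ a ∈ 𝒜 i, a = 0)
    (T : Submonoid A) (hThom : ∀ t ∈ T, SetLike.IsHomogeneousElem 𝒜 t)
    (hT0 : (0 : A) ∉ T) (hTpos : ∃ t ∈ T, ∃ i : ℤ, 0 < i ∧ t ∈ 𝒜 i)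
    (𝒜' : ℤ → AddSubgroup (Localization T)) [GradedRing 𝒜']
    (h𝒜' : ∀ (n : ℤ) (x : Localization T), x ∈ 𝒜' n ↔
      ∃ (i j : ℤ) (a t : A) (_ : t ∈ T), a ∈ 𝒜 i ∧ t ∈ 𝒜 j ∧ n = i - j ∧
        x * algebraMap A (Localization T) t = algebraMap A (Localization T) a)
    (ι : (𝒜' 0) →+* Localization T) (hι : ∀ x : 𝒜' 0, ι x = (x : Localization T)) :
    ∃ e : {𝔭 : Ideal A // 𝔭.IsPrime ∧ Ideal.IsHomogeneous 𝒜 𝔭 ∧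
          Disjoint (T : Set A) (𝔭 : Set A) ∧ ∃ i : ℤ, 0 < i ∧ ∃ a ∈ 𝒜 i, a ∉ 𝔭} ≃
        {q : Ideal (𝒜' 0) // q.IsPrime},
      (∀ p, (e p : Ideal (𝒜' 0)) =
          Ideal.comap ι (Ideal.map (algebraMap A (Localization T)) (p : Ideal A))) ∧
      ∀ p q : {𝔭 : Ideal A // 𝔭.IsPrime ∧ Ideal.IsHomogeneous 𝒜 𝔭 ∧
          Disjoint (T : Set A) (𝔭 : Set A) ∧ ∃ i : ℤ, 0 < i ∧ ∃ a ∈ 𝒜 i, a ∉ 𝔭},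
        (p : Ideal A) ≤ (q : Ideal A) ↔ (e p : Ideal (𝒜' 0)) ≤ (e q : Ideal (𝒜' 0)) :=
  stmt_16_general 𝒜 T hTpos 𝒜' h𝒜' ι hι
end
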